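/- arXiv:2303.06412 — 14 statements merged into one kernel-verified Lean document; each statement's English description precedes it below -/
import Mathlib

section
/- Let i ∈ {0,1} be fixed and let x : [0,∞) → ℝ³ be differentiable with x'(t) = g(x(t), i) for all t ≥ 0 and x(0) ∈ E := [0,1] × [0,∞) × [0,∞). Then x(t) ∈ E for all t ≥ 0, i.e. the set E is positively invariant under the flow of each of the vector fields g(·,0) and g(·,1). -/
/-!
On each face of the box `E` the vector field points into `E`, strictly on `x₁ = 0` and
`x₁ = 1` but only weakly on `x₂ = 0` and `x₃ = 0`. On `x₁ = 0` the field has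
`x₁' = a > 0`, so `x₁ ≥ 0` holds for all time by itself. With `x₁ ≥ 0`, each of `x₂, x₃` solves `u' = g - k u` with `g ≥ 0` for as long as `x₂, x₃ ≥ 0`
keep the denominators of `r` and `r_M` positive; the integrating factor `e^{k t}` makes
`u e^{k t}` monotone, and continuous induction gives `x₂, x₃ ≥ 0` for all time. Finally,
on `x₁ = 1` the field has `x₁' = -q(x₂, x₃) ≤ -q₁ < 0`, which gives `x₁ ≤ 1`.
-/

open Set Filter Topology

lemma nonneg_of_hasDerivAt_of_pos_of_eq_zero {u u' : ℝ → ℝ} {a : ℝ}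
    (hu : ∀ t ≥ a, HasDerivAt u (u' t) t) (ha : 0 ≤ u a)
    (hpos : ∀ t ≥ a, u t = 0 → 0 < u' t) : ∀ t ≥ a, 0 ≤ u t := by
  intro t ht
  have key := image_le_of_deriv_right_lt_deriv_boundary (a := a) (b := t)
    (f := fun s => -u s) (f' := fun s => -u' s) (B := 0) (B' := 0)
    (HasDerivAt.continuousOn fun s hs => (hu s hs.1).neg)
    (fun s hs => (hu s hs.1).neg.hasDerivWithinAt) (by simpa using ha)
    (fun _ => hasDerivAt_const _ _)
    (fun s hs hs0 => by simpa using hpos s hs.1 (neg_eq_zero.mp hs0))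
    ⟨ht, le_rfl⟩
  simpa using key

lemma nonneg_of_hasDerivAt_sub_mul {u g : ℝ → ℝ} {k a b : ℝ}
    (hu : ∀ t ∈ Icc a b, HasDerivAt u (g t - k * u t) t) (hg : ∀ t ∈ Icc a b, 0 ≤ g t)
    (ha : 0 ≤ u a) : ∀ t ∈ Icc a b, 0 ≤ u t := by
  set v : ℝ → ℝ := fun t => u t * Real.exp (k * t)
  have hv : ∀ t ∈ Icc a b, HasDerivAt v (g t * Real.exp (k * t)) t := by
    intro t ht
    have hexp : HasDerivAt (fun s => Real.exp (k * s)) (Real.exp (k * t) * k) t := by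
      simpa using ((hasDerivAt_id t).const_mul k).exp
    exact ((hu t ht).fun_mul hexp).congr_deriv (by ring)
  have hmono : MonotoneOn v (Icc a b) := by
    refine monotoneOn_of_hasDerivWithinAt_nonneg (f' := fun t => g t * Real.exp (k * t))
      (convex_Icc a b) (HasDerivAt.continuousOn hv)
      (fun t ht => ?_) (fun t ht => ?_) <;> rw [interior_Icc] at ht
    · exact (hv t (Ioo_subset_Icc_self ht)).hasDerivWithinAt
    · exact mul_nonneg (hg t (Ioo_subset_Icc_self ht)) (Real.exp_pos _).le
  intro t ht
  have hvt : 0 ≤ v t :=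
    (mul_nonneg ha (Real.exp_pos _).le).trans (hmono ⟨le_rfl, ht.1.trans ht.2⟩ ht ht.1)
  exact nonneg_of_mul_nonneg_left hvt (Real.exp_pos _)

lemma eventually_nonneg_of_hasDerivAt_sub_mul {u g : ℝ → ℝ} {k t : ℝ}
    (hu : ∀ᶠ s in 𝓝[≥] t, HasDerivAt u (g s - k * u s) s) (hg : ∀ᶠ s in 𝓝[≥] t, 0 ≤ g s)
    (ht : 0 ≤ u t) : ∀ᶠ s in 𝓝[≥] t, 0 ≤ u s := by
  obtain ⟨b, htb, hsub⟩ := mem_nhdsGE_iff_exists_Icc_subset.mp (hu.and hg)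
  filter_upwards [Icc_mem_nhdsGE htb] with s hs
  exact nonneg_of_hasDerivAt_sub_mul (fun r hr => (hsub hr).1) (fun r hr => (hsub hr).2) ht s hs

/-- Via `hgh` the sources may depend on `u` and `v` themselves, as `r` and `r_M` do. -/
lemma nonneg_of_hasDerivAt_sub_mul_pair {u v g h : ℝ → ℝ} {k l a : ℝ}
    (hu : ∀ t ≥ a, HasDerivAt u (g t - k * u t) t)
    (hv : ∀ t ≥ a, HasDerivAt v (h t - l * v t) t) (hua : 0 ≤ u a) (hva : 0 ≤ v a)
    (hgh : ∀ t ≥ a, 0 ≤ u t → 0 ≤ v t → ∀ᶠ s in 𝓝[≥] t, 0 ≤ g s ∧ 0 ≤ h s) :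
    ∀ t ≥ a, 0 ≤ u t ∧ 0 ≤ v t := by
  intro b hab
  have hclosed : IsClosed ({t | 0 ≤ u t ∧ 0 ≤ v t} ∩ Icc a b) := by
    have hcont {w w' : ℝ → ℝ} (hw : ∀ t ≥ a, HasDerivAt w (w' t) t) : ContinuousOn w (Icc a b) :=
      HasDerivAt.continuousOn fun t ht => hw t ht.1
    convert ((hcont hu).preimage_isClosed_of_isClosed isClosed_Icc isClosed_Ici).inter
      ((hcont hv).preimage_isClosed_of_isClosed isClosed_Icc isClosed_Ici) using 1
    ext t
    simp only [mem_inter_iff, mem_ofPred_eq, mem_preimage, mem_Ici]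
    tauto
  refine hclosed.Icc_subset_of_forall_mem_nhdsWithin ⟨hua, hva⟩ ?_ ⟨hab, le_rfl⟩
  rintro t ⟨⟨hut, hvt⟩, hat, -⟩
  have hnear {w w' : ℝ → ℝ} (hw : ∀ t ≥ a, HasDerivAt w (w' t) t) :
      ∀ᶠ s in 𝓝[≥] t, HasDerivAt w (w' s) s := by
    filter_upwards [self_mem_nhdsWithin] with s (hs : t ≤ s)
    exact hw s (hat.trans hs)
  have hsrc := hgh t hat hut hvt
  have hnonneg := (eventually_nonneg_of_hasDerivAt_sub_mul (hnear hu) (hsrc.mono fun _ => And.left)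
    hut).and (eventually_nonneg_of_hasDerivAt_sub_mul (hnear hv)
    (hsrc.mono fun _ => And.right) hvt)
  exact nhdsWithin_mono t Ioi_subset_Ici_self hnonneg

theorem stmt_0_general
    (a q₁ c₁ d c₁M dM q₂ q₃ c₂ c₃ c₂M c₃M : ℝ)
    (ha : 0 < a) (hq₁ : 0 < q₁) (hc₁ : 0 < c₁)
    (hc₁M : 0 < c₁M)
    (hq₂ : 0 ≤ q₂) (hq₃ : 0 ≤ q₃) (hc₂ : 0 ≤ c₂) (hc₃ : 0 ≤ c₃)
    (hc₂M : 0 ≤ c₂M) (hc₃M : 0 ≤ c₃M)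
    (i : ℝ) (hi : i = 0 ∨ i = 1)
    (x₁ x₂ x₃ : ℝ → ℝ)
    (hx₁ : ∀ t ≥ (0:ℝ), HasDerivAt x₁
      (a * (1 - x₁ t) - (q₁ + q₂ * x₂ t + q₃ * x₃ t) * x₁ t) t)
    (hx₂ : ∀ t ≥ (0:ℝ), HasDerivAt x₂
      (c₁ / (1 + c₂ * x₂ t + c₃ * x₃ t) * x₁ t - d * x₂ t) t)
    (hx₃ : ∀ t ≥ (0:ℝ), HasDerivAt x₃
      (c₁M / (1 + c₂M * x₂ t + c₃M * x₃ t) * i - dM * x₃ t) t)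
    (h0 : x₁ 0 ∈ Icc (0:ℝ) 1 ∧ 0 ≤ x₂ 0 ∧ 0 ≤ x₃ 0) :
    ∀ t ≥ (0:ℝ), x₁ t ∈ Icc (0:ℝ) 1 ∧ 0 ≤ x₂ t ∧ 0 ≤ x₃ t := by
  have hx₁_nonneg : ∀ t ≥ 0, 0 ≤ x₁ t :=
    nonneg_of_hasDerivAt_of_pos_of_eq_zero hx₁ h0.1.1 fun t _ h => by simpa [h] using ha
  have hden : ∀ {b b' : ℝ}, 0 ≤ b → 0 ≤ b' → ∀ t ≥ 0, 0 ≤ x₂ t → 0 ≤ x₃ t →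
      ∀ᶠ s in 𝓝[≥] t, 0 < 1 + b * x₂ s + b' * x₃ s := by
    intro b b' hb hb' t ht h₂ h₃
    have hcont : ContinuousAt (fun s => 1 + b * x₂ s + b' * x₃ s) t :=
      (continuousAt_const.add ((hx₂ t ht).continuousAt.const_mul b)).add
        ((hx₃ t ht).continuousAt.const_mul b')
    exact nhdsWithin_le_nhds (hcont.eventually (Ioi_mem_nhds (by positivity)))
  have hx₂₃_nonneg : ∀ t ≥ 0, 0 ≤ x₂ t ∧ 0 ≤ x₃ t := by
    refine nonneg_of_hasDerivAt_sub_mul_pair hx₂ hx₃ h0.2.1 h0.2.2 fun t ht h₂ h₃ => ?_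
    filter_upwards [hden hc₂ hc₃ t ht h₂ h₃, hden hc₂M hc₃M t ht h₂ h₃, self_mem_nhdsWithin]
      with s hs hsM (hts : t ≤ s)
    have hi₀ : 0 ≤ i := by rcases hi with rfl | rfl <;> norm_num
    exact ⟨by have := hx₁_nonneg s (ht.trans hts); positivity, by positivity⟩
  have hx₁_le : ∀ t ≥ 0, 0 ≤ 1 - x₁ t := by
    refine nonneg_of_hasDerivAt_of_pos_of_eq_zero (fun t ht => (hx₁ t ht).const_sub 1)
      (sub_nonneg.mpr h0.1.2) fun t ht h => ?_
    obtain ⟨h₂, h₃⟩ := hx₂₃_nonneg t ht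
    rw [show x₁ t = 1 by linarith]
    nlinarith [mul_nonneg hq₂ h₂, mul_nonneg hq₃ h₃]
  exact fun t ht => ⟨⟨hx₁_nonneg t ht, by linarith [hx₁_le t ht]⟩, hx₂₃_nonneg t ht⟩

/-- The set `E = [0,1] × [0,∞) × [0,∞)` is positively invariant
under the flow of each of the vector fields `g(·,0)` and `g(·,1)`. -/
theorem stmt_0
    (a q₁ c₁ d c₁M dM q₂ q₃ c₂ c₃ c₂M c₃M : ℝ)
    (ha : 0 < a) (hq₁ : 0 < q₁) (hc₁ : 0 < c₁) (hd : 0 < d)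
    (hc₁M : 0 < c₁M) (hdM : 0 < dM)
    (hq₂ : 0 ≤ q₂) (hq₃ : 0 ≤ q₃) (hc₂ : 0 ≤ c₂) (hc₃ : 0 ≤ c₃)
    (hc₂M : 0 ≤ c₂M) (hc₃M : 0 ≤ c₃M)
    (i : ℝ) (hi : i = 0 ∨ i = 1)
    (x₁ x₂ x₃ : ℝ → ℝ)
    (hx₁ : ∀ t ≥ (0:ℝ), HasDerivAt x₁
      (a * (1 - x₁ t) - (q₁ + q₂ * x₂ t + q₃ * x₃ t) * x₁ t) t)
    (hx₂ : ∀ t ≥ (0:ℝ), HasDerivAt x₂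
      (c₁ / (1 + c₂ * x₂ t + c₃ * x₃ t) * x₁ t - d * x₂ t) t)
    (hx₃ : ∀ t ≥ (0:ℝ), HasDerivAt x₃
      (c₁M / (1 + c₂M * x₂ t + c₃M * x₃ t) * i - dM * x₃ t) t)
    (h0 : x₁ 0 ∈ Icc (0:ℝ) 1 ∧ 0 ≤ x₂ 0 ∧ 0 ≤ x₃ 0) :
    ∀ t ≥ (0:ℝ), x₁ t ∈ Icc (0:ℝ) 1 ∧ 0 ≤ x₂ t ∧ 0 ≤ x₃ t :=
  stmt_0_general a q₁ c₁ d c₁M dM q₂ q₃ c₂ c₃ c₂M c₃M ha hq₁ hc₁ hc₁M hq₂ hq₃ hc₂ hc₃ hc₂M hc₃M i hi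
    x₁ x₂ x₃ hx₁ hx₂ hx₃ h0
end

section
/- Let x₁, x₂, x₃ : [0,∞) → ℝ with x₁ differentiable, x₁'(t) = a(1−x₁(t)) − q(x₂(t),x₃(t))·x₁(t) for all t ≥ 0, and x₁(t) ≥ 0, x₂(t) ≥ 0, x₃(t) ≥ 0 for all t ≥ 0. Then for all t ≥ 0, x₁(t) ≤ (a/(a+q₁))·(1 − e^{−(a+q₁)t}) + x₁(0)·e^{−(a+q₁)t}. -/
open Set Real

/-- upper bound on `x₁` by the solution of the comparison ODE
`y' = a(1-y) - q₁ y`. -/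
theorem stmt_3
    (a q₁ q₂ q₃ : ℝ) (ha : 0 < a) (hq₁ : 0 < q₁) (hq₂ : 0 ≤ q₂) (hq₃ : 0 ≤ q₃)
    (x₁ x₂ x₃ : ℝ → ℝ)
    (hx₁ : ∀ t ≥ (0:ℝ), HasDerivAt x₁
      (a * (1 - x₁ t) - (q₁ + q₂ * x₂ t + q₃ * x₃ t) * x₁ t) t)
    (hpos : ∀ t ≥ (0:ℝ), 0 ≤ x₁ t ∧ 0 ≤ x₂ t ∧ 0 ≤ x₃ t) :
    ∀ t ≥ (0:ℝ), x₁ t ≤ a / (a + q₁) * (1 - Real.exp (-(a + q₁) * t))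
      + x₁ 0 * Real.exp (-(a + q₁) * t) := by
  intro t ht
  set k : ℝ := a + q₁ with hk
  have hk0 : 0 < k := by positivity
  set f : ℝ → ℝ := fun s => Real.exp (k * s) * (x₁ s - a / k) with hf
  have hderiv : ∀ s ∈ Set.Ici (0:ℝ), HasDerivAt f
      (k * Real.exp (k * s) * (x₁ s - a / k)
        + Real.exp (k * s)
          * (a * (1 - x₁ s) - (q₁ + q₂ * x₂ s + q₃ * x₃ s) * x₁ s)) s := by
    intro s hs
    have h1 : HasDerivAt (fun u : ℝ => Real.exp (k * u)) (k * Real.exp (k * s)) s := by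
      simpa [mul_comm] using ((hasDerivAt_id s).const_mul k).exp
    have h2 : HasDerivAt (fun u => x₁ u - a / k)
        (a * (1 - x₁ s) - (q₁ + q₂ * x₂ s + q₃ * x₃ s) * x₁ s) s := by
      simpa using (hx₁ s hs).sub_const (a / k)
    exact h1.mul h2
  have hcont : ContinuousOn f (Set.Ici (0:ℝ)) := fun s hs =>
    ((hderiv s hs).continuousAt).continuousWithinAt
  have hdiff : DifferentiableOn ℝ f (interior (Set.Ici (0:ℝ))) := fun s hs =>
    ((hderiv s (interior_subset hs)).differentiableAt).differentiableWithinAt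
  have hnonpos : ∀ s ∈ interior (Set.Ici (0:ℝ)), deriv f s ≤ 0 := by
    intro s hs
    have hs' : s ∈ Set.Ici (0:ℝ) := interior_subset hs
    rw [(hderiv s hs').deriv]
    obtain ⟨h1, h2, h3⟩ := hpos s hs'
    have hr : 0 ≤ (q₂ * x₂ s + q₃ * x₃ s) * x₁ s := by positivity
    have : k * Real.exp (k * s) * (x₁ s - a / k)
        + Real.exp (k * s) * (a * (1 - x₁ s) - (q₁ + q₂ * x₂ s + q₃ * x₃ s) * x₁ s)
        = - Real.exp (k * s) * ((q₂ * x₂ s + q₃ * x₃ s) * x₁ s) := by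
      field_simp
      ring
    rw [this]
    have := Real.exp_pos (k * s)
    nlinarith
  have hanti : AntitoneOn f (Set.Ici (0:ℝ)) :=
    antitoneOn_of_deriv_nonpos (convex_Ici 0) hcont hdiff hnonpos
  have hft : f t ≤ f 0 := hanti (Set.self_mem_Ici) ht ht
  have hexp0 : f 0 = x₁ 0 - a / k := by simp [hf]
  have hept : (0:ℝ) < Real.exp (k * t) := Real.exp_pos _
  have key : x₁ t - a / k ≤ (x₁ 0 - a / k) * Real.exp (-(k * t)) := by
    rw [Real.exp_neg, ← div_eq_mul_inv, le_div_iff₀ hept]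
    rw [hexp0] at hft
    simpa [hf, mul_comm] using hft
  have hrw : a / (a + q₁) * (1 - Real.exp (-(a + q₁) * t))
      + x₁ 0 * Real.exp (-(a + q₁) * t)
      = a / k + (x₁ 0 - a / k) * Real.exp (-(k * t)) := by
    rw [hk]; ring_nf
  rw [hrw]
  linarith
end

section
/- Let x₁, x₂, x₃ : [0,∞) → ℝ with x₂ differentiable, x₂'(t) = r(x₂(t),x₃(t))·x₁(t) − d·x₂(t) for all t ≥ 0, and 0 ≤ x₁(t) ≤ 1, x₂(t) ≥ 0, x₃(t) ≥ 0 for all t ≥ 0. Then for all t ≥ 0, x₂(t) ≤ (c₁/d)·(1 − e^{−dt}) + x₂(0)·e^{−dt}. -/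
open Set Real

/-- The right-hand side is `gronwallBound (x 0) (-d) a t`, the solution of `z' = a - d z`,
`z 0 = x 0`, which dominates every subsolution. -/
theorem le_of_hasDerivAt_le_const_sub_mul {x x' : ℝ → ℝ} {a d : ℝ} (hd : d ≠ 0)
    (hx : ∀ t ≥ (0:ℝ), HasDerivAt x (x' t) t) (bound : ∀ t ≥ (0:ℝ), x' t ≤ a - d * x t) :
    ∀ t ≥ (0:ℝ), x t ≤ a / d * (1 - exp (-d * t)) + x 0 * exp (-d * t) := by
  intro t ht
  have hcont : ContinuousOn x (Icc 0 t) := fun s hs => (hx s hs.1).continuousAt.continuousWithinAt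
  have hgron := le_gronwallBound_of_liminf_deriv_right_le hcont
    (fun s hs _ hr => (hx s hs.1).hasDerivWithinAt.liminf_right_slope_le hr) le_rfl
    (K := -d) (ε := a) (fun s hs => (bound s hs.1).trans_eq (by ring)) t ⟨ht, le_rfl⟩
  rw [sub_zero, gronwallBound_of_K_ne_0 (neg_ne_zero.mpr hd)] at hgron
  convert hgron using 1
  rw [div_neg]
  ring

/-- upper bound on `x₂` by the solution of the comparison ODE
`z' = c₁ - d z`. -/
theorem stmt_4
    (c₁ d c₂ c₃ : ℝ) (hc₁ : 0 < c₁) (hd : 0 < d) (hc₂ : 0 ≤ c₂) (hc₃ : 0 ≤ c₃)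
    (x₁ x₂ x₃ : ℝ → ℝ)
    (hx₂ : ∀ t ≥ (0:ℝ), HasDerivAt x₂
      (c₁ / (1 + c₂ * x₂ t + c₃ * x₃ t) * x₁ t - d * x₂ t) t)
    (hb : ∀ t ≥ (0:ℝ), 0 ≤ x₁ t ∧ x₁ t ≤ 1 ∧ 0 ≤ x₂ t ∧ 0 ≤ x₃ t) :
    ∀ t ≥ (0:ℝ), x₂ t ≤ c₁ / d * (1 - Real.exp (-d * t))
      + x₂ 0 * Real.exp (-d * t) := by
  refine le_of_hasDerivAt_le_const_sub_mul hd.ne' hx₂ fun t ht => ?_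
  obtain ⟨-, hx₁_le, hx₂t, hx₃t⟩ := hb t ht
  have hden : 1 ≤ 1 + c₂ * x₂ t + c₃ * x₃ t := by
    linarith [mul_nonneg hc₂ hx₂t, mul_nonneg hc₃ hx₃t]
  have hrate : c₁ / (1 + c₂ * x₂ t + c₃ * x₃ t) * x₁ t ≤ c₁ :=
    calc c₁ / (1 + c₂ * x₂ t + c₃ * x₃ t) * x₁ t
        ≤ c₁ / (1 + c₂ * x₂ t + c₃ * x₃ t) := mul_le_of_le_one_right (by positivity) hx₁_le
      _ ≤ c₁ := div_le_self hc₁.le hden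
  linarith
end

section
/- Let i : [0,∞) → [0,1] and x₂, x₃ : [0,∞) → ℝ with x₃ differentiable, x₃'(t) = r_M(x₂(t),x₃(t))·i(t) − d_M·x₃(t) for all t ≥ 0, and x₂(t) ≥ 0, x₃(t) ≥ 0 for all t ≥ 0. Then for all t ≥ 0, x₃(t) ≤ (c_{1,M}/d_M)·(1 − e^{−d_M t}) + x₃(0)·e^{−d_M t}. -/
open Set Real

/-!
Comparison with the linear ODE `z' = c₁ - d z`: since `r_M ≤ c₁` and `i ≤ 1`, the right-hand
side of the equation for `x₃` is at most `c₁ - d x₃`. Multiplying by the integrating factor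
`exp (d t)`, the function `(x₃ t - c₁ / d) * exp (d t)` has nonpositive derivative, so it is
bounded by its value at `0`, which is the claimed bound.
-/

theorem hasDerivAt_sub_div_mul_exp {f : ℝ → ℝ} {f' c d t : ℝ} (hd : d ≠ 0)
    (hf : HasDerivAt f f' t) :
    HasDerivAt (fun s => (f s - c / d) * exp (d * s)) ((f' + d * f t - c) * exp (d * t)) t := by
  have hexp : HasDerivAt (fun s => exp (d * s)) (exp (d * t) * d) t :=
    (hasDerivAt_exp (d * t)).comp t ((hasDerivAt_id t).const_mul d |>.congr_deriv (mul_one d))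
  have hprod : HasDerivAt (fun s => (f s - c / d) * exp (d * s)) _ t :=
    (hf.sub_const (c / d)).mul hexp
  convert hprod using 1
  field_simp
  ring

theorem le_of_hasDerivAt_le_const_sub_mul_s5 {f f' : ℝ → ℝ} {c d : ℝ} (hd : d ≠ 0)
    (hf : ∀ t ≥ (0 : ℝ), HasDerivAt f (f' t) t) (hf' : ∀ t ≥ (0 : ℝ), f' t ≤ c - d * f t)
    {t : ℝ} (ht : 0 ≤ t) :
    f t ≤ c / d * (1 - exp (-d * t)) + f 0 * exp (-d * t) := by
  set g : ℝ → ℝ := fun s => (f s - c / d) * exp (d * s)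
  have hg : ∀ s ≥ (0 : ℝ), HasDerivAt g ((f' s + d * f s - c) * exp (d * s)) s :=
    fun s hs => hasDerivAt_sub_div_mul_exp hd (hf s hs)
  have hanti : AntitoneOn g (Ici 0) := by
    refine antitoneOn_of_hasDerivWithinAt_nonpos (convex_Ici 0)
      (fun s hs => (hg s hs).continuousAt.continuousWithinAt)
      (fun s hs => (hg s (interior_subset hs)).hasDerivWithinAt) fun s hs => ?_
    have := hf' s (interior_subset hs)
    exact mul_nonpos_of_nonpos_of_nonneg (by linarith) (exp_pos _).le
  have hgt : (f t - c / d) * exp (d * t) ≤ f 0 - c / d := by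
    simpa [g] using hanti self_mem_Ici ht ht
  have hcancel : exp (d * t) * exp (-d * t) = 1 := by
    rw [← exp_add]; simp
  have := mul_le_mul_of_nonneg_right hgt (exp_pos (-d * t)).le
  rw [mul_assoc, hcancel, mul_one] at this
  linarith

/-- upper bound on `x₃` by the solution of the comparison ODE
`z' = c₁M - dM z`. -/
theorem stmt_5
    (c₁M dM c₂M c₃M : ℝ) (hc₁M : 0 < c₁M) (hdM : 0 < dM)
    (hc₂M : 0 ≤ c₂M) (hc₃M : 0 ≤ c₃M)
    (i : ℝ → ℝ) (hi : ∀ t, i t ∈ Icc (0:ℝ) 1)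
    (x₂ x₃ : ℝ → ℝ)
    (hx₃ : ∀ t ≥ (0:ℝ), HasDerivAt x₃
      (c₁M / (1 + c₂M * x₂ t + c₃M * x₃ t) * i t - dM * x₃ t) t)
    (hb : ∀ t ≥ (0:ℝ), 0 ≤ x₂ t ∧ 0 ≤ x₃ t) :
    ∀ t ≥ (0:ℝ), x₃ t ≤ c₁M / dM * (1 - Real.exp (-dM * t))
      + x₃ 0 * Real.exp (-dM * t) := by
  refine fun t ht => le_of_hasDerivAt_le_const_sub_mul_s5 hdM.ne' hx₃ (fun s hs => ?_) ht
  obtain ⟨hx₂s, hx₃s⟩ := hb s hs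
  have hden : 1 ≤ 1 + c₂M * x₂ s + c₃M * x₃ s := by
    have := mul_nonneg hc₂M hx₂s
    have := mul_nonneg hc₃M hx₃s
    linarith
  have hrate : c₁M / (1 + c₂M * x₂ s + c₃M * x₃ s) * i s ≤ c₁M :=
    (mul_le_of_le_one_right (div_nonneg hc₁M.le (zero_le_one.trans hden)) (hi s).2).trans
      (div_le_self hc₁M.le hden)
  linarith
end

section
/- Let x₁, x₂, x₃ : [0,∞) → ℝ with x₁ differentiable, x₁'(t) = a(1−x₁(t)) − q(x₂(t),x₃(t))·x₁(t) for all t ≥ 0, and x₁(t) ≥ 0, 0 ≤ x₂(t) ≤ c₁/d, 0 ≤ x₃(t) ≤ c_{1,M}/d_M for all t ≥ 0. Set λ = a + q₁ + q₂c₁/d + q₃c_{1,M}/d_M and b₁ = a/λ. Then for all t ≥ 0, x₁(t) ≥ b₁·(1 − e^{−λt}) + x₁(0)·e^{−λt}. -/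
open Set Real

/-!
Since `λ - a` dominates `q(x₂, x₃)`, the nonnegative `x₁` is a supersolution of the linear
equation `y' = a - λ y`: `x₁' ≥ a - λ x₁`. Multiplying by the integrating factor `e^{λt}` makes
`e^{λt} (x₁(t) - a/λ)` nondecreasing, and comparing its values at `0` and `t` is the bound.
-/

theorem le_of_hasDerivAt_ge_linear {f f' : ℝ → ℝ} {a lam : ℝ} (hlam : lam ≠ 0)
    (hf : ∀ t ≥ (0 : ℝ), HasDerivAt f (f' t) t)
    (hf' : ∀ t ≥ (0 : ℝ), a - lam * f t ≤ f' t) :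
    ∀ t ≥ (0 : ℝ), a / lam * (1 - exp (-lam * t)) + f 0 * exp (-lam * t) ≤ f t := by
  set g : ℝ → ℝ := fun s => exp (lam * s) * (f s - a / lam)
  have hg : ∀ s ≥ (0 : ℝ),
      HasDerivAt g (exp (lam * s) * (f' s - (a - lam * f s))) s := by
    intro s hs
    have hexp : HasDerivAt (fun s => exp (lam * s)) (exp (lam * s) * lam) s := by
      simpa using ((hasDerivAt_id s).const_mul lam).exp
    have hcancel : lam * (a / lam) = a := mul_div_cancel₀ a hlam
    refine (hexp.mul ((hf s hs).sub_const (a / lam))).congr_deriv ?_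
    linear_combination -exp (lam * s) * hcancel
  have hg_mono : MonotoneOn g (Ici 0) := by
    refine monotoneOn_of_hasDerivWithinAt_nonneg (convex_Ici 0)
      (fun s hs => (hg s hs).continuousAt.continuousWithinAt)
      (fun s hs => (hg s (interior_subset hs)).hasDerivWithinAt) fun s hs => ?_
    exact mul_nonneg (exp_pos _).le (sub_nonneg.2 (hf' s (interior_subset hs)))
  intro t ht
  have h0t : g 0 ≤ g t := hg_mono self_mem_Ici ht ht
  have hcancel : exp (-lam * t) * exp (lam * t) = 1 := by
    rw [← exp_add]; simp
  have := mul_le_mul_of_nonneg_left h0t (exp_pos (-lam * t)).le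
  simp only [g, mul_zero, exp_zero, one_mul, ← mul_assoc, hcancel] at this
  linarith

/-- lower bound on `x₁` by the solution of the comparison ODE
`y' = a - λ y`, with `λ = a + q₁ + q₂ c₁/d + q₃ c₁M/dM` and `b₁ = a/λ`. -/
theorem stmt_6
    (a q₁ c₁ d c₁M dM q₂ q₃ : ℝ)
    (ha : 0 < a) (hq₁ : 0 < q₁) (hc₁ : 0 < c₁) (hd : 0 < d)
    (hc₁M : 0 < c₁M) (hdM : 0 < dM) (hq₂ : 0 ≤ q₂) (hq₃ : 0 ≤ q₃)
    (lam b₁ : ℝ)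
    (hlam : lam = a + q₁ + q₂ * (c₁ / d) + q₃ * (c₁M / dM))
    (hb₁ : b₁ = a / lam)
    (x₁ x₂ x₃ : ℝ → ℝ)
    (hx₁ : ∀ t ≥ (0:ℝ), HasDerivAt x₁
      (a * (1 - x₁ t) - (q₁ + q₂ * x₂ t + q₃ * x₃ t) * x₁ t) t)
    (hb : ∀ t ≥ (0:ℝ), 0 ≤ x₁ t ∧ x₂ t ∈ Icc 0 (c₁ / d) ∧
      x₃ t ∈ Icc 0 (c₁M / dM)) :
    ∀ t ≥ (0:ℝ), b₁ * (1 - Real.exp (-lam * t))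
      + x₁ 0 * Real.exp (-lam * t) ≤ x₁ t := by
  have hlam_pos : 0 < lam := by rw [hlam]; positivity
  subst hb₁
  refine le_of_hasDerivAt_ge_linear hlam_pos.ne' hx₁ fun t ht => ?_
  obtain ⟨hx₁_nonneg, ⟨-, hx₂_le⟩, -, hx₃_le⟩ := hb t ht
  have hrate : q₁ + q₂ * x₂ t + q₃ * x₃ t ≤ lam - a := by
    rw [hlam]
    linarith [mul_le_mul_of_nonneg_left hx₂_le hq₂, mul_le_mul_of_nonneg_left hx₃_le hq₃]
  linarith [mul_le_mul_of_nonneg_right hrate hx₁_nonneg]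
end

section
/- Let x₁, x₂, x₃ : [0,∞) → ℝ with x₂ differentiable, x₂'(t) = r(x₂(t),x₃(t))·x₁(t) − d·x₂(t) for all t ≥ 0, and b₁ ≤ x₁(t) ≤ 1, 0 ≤ x₂(t) ≤ c₁/d, 0 ≤ x₃(t) ≤ c_{1,M}/d_M for all t ≥ 0, where b₁ = a/(a + q₁ + q₂c₁/d + q₃c_{1,M}/d_M). Set b₂ = c₁b₁/(d(1 + c₂c₁/d + c₃c_{1,M}/d_M)). Then for all t ≥ 0, x₂(t) ≥ b₂·(1 − e^{−dt}) + x₂(0)·e^{−dt}. -/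
/-!
Subtracting the constant `b₂` and multiplying by the integrating factor `e^{dt}` turns the
differential inequality `x₂' ≥ d (b₂ - x₂)` into the monotonicity of `(x₂ - b₂) e^{dt}`.
That inequality holds because the saturating rate `c₁ / (1 + c₂ x₂ + c₃ x₃)` is smallest when
`x₂` and `x₃` sit at their upper bounds, and `x₁ ≥ b₁ ≥ 0`.
-/

open Set Real

theorem monotoneOn_sub_mul_exp_of_hasDerivAt {y y' : ℝ → ℝ} {d b : ℝ}
    (hy : ∀ t ≥ (0:ℝ), HasDerivAt y (y' t) t) (hy' : ∀ t ≥ (0:ℝ), d * (b - y t) ≤ y' t) :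
    MonotoneOn (fun t => (y t - b) * exp (d * t)) (Ici 0) := by
  have hderiv : ∀ t ≥ (0:ℝ), HasDerivAt (fun t => (y t - b) * exp (d * t))
      ((y' t - d * (b - y t)) * exp (d * t)) t := by
    intro t ht
    have hexp : HasDerivAt (fun t => exp (d * t)) (exp (d * t) * d) t :=
      ((hasDerivAt_id t).const_mul d).exp.congr_deriv (by simp)
    exact (((hy t ht).sub_const b).mul hexp).congr_deriv (by ring)
  refine monotoneOn_of_hasDerivWithinAt_nonneg (convex_Ici 0)
    (fun t ht => (hderiv t ht).continuousAt.continuousWithinAt)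
    (fun t ht => (hderiv t (interior_subset ht)).hasDerivWithinAt)
    (fun t ht => mul_nonneg ?_ (exp_pos _).le)
  linarith [hy' t (interior_subset ht)]

/-- Comparison with the solution `b (1 - e^{-dt}) + y(0) e^{-dt}` of `z' = d (b - z)`. -/
theorem comparison_of_hasDerivAt_ge {y y' : ℝ → ℝ} {d b : ℝ}
    (hy : ∀ t ≥ (0:ℝ), HasDerivAt y (y' t) t) (hy' : ∀ t ≥ (0:ℝ), d * (b - y t) ≤ y' t) :
    ∀ t ≥ (0:ℝ), b * (1 - exp (-d * t)) + y 0 * exp (-d * t) ≤ y t := by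
  intro t ht
  have hmono := monotoneOn_sub_mul_exp_of_hasDerivAt hy hy' self_mem_Ici (mem_Ici.mpr ht) ht
  simp only [mul_zero, exp_zero, mul_one] at hmono
  have hcancel : exp (-d * t) * ((y t - b) * exp (d * t)) = y t - b := by
    rw [mul_left_comm, ← exp_add]; simp
  have hscaled := mul_le_mul_of_nonneg_left hmono (exp_pos (-d * t)).le
  rw [hcancel] at hscaled
  linarith

theorem one_le_one_add_mul_add_mul {c₂ c₃ u v : ℝ} (hc₂ : 0 ≤ c₂) (hc₃ : 0 ≤ c₃)
    (hu : 0 ≤ u) (hv : 0 ≤ v) : 1 ≤ 1 + c₂ * u + c₃ * v := by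
  nlinarith [mul_nonneg hc₂ hu, mul_nonneg hc₃ hv]

theorem one_add_mul_add_mul_le {c₂ c₃ u v U V : ℝ} (hc₂ : 0 ≤ c₂) (hc₃ : 0 ≤ c₃)
    (hu : u ≤ U) (hv : v ≤ V) : 1 + c₂ * u + c₃ * v ≤ 1 + c₂ * U + c₃ * V := by
  nlinarith [mul_le_mul_of_nonneg_left hu hc₂, mul_le_mul_of_nonneg_left hv hc₃]

theorem mul_div_le_div_mul_of_le {c e D b x : ℝ} (hc : 0 ≤ c) (he : 0 < e) (heD : e ≤ D)
    (hb : 0 ≤ b) (hbx : b ≤ x) : c * b / D ≤ c / e * x :=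
  calc c * b / D = c / D * b := by ring
    _ ≤ c / e * x := mul_le_mul (div_le_div_of_nonneg_left hc he heD) hbx hb (by positivity)

/-- lower bound on `x₂` by the solution of the comparison ODE
`z' = d b₂ - d z`, with `b₂ = c₁ b₁ / (d (1 + c₂ c₁/d + c₃ c₁M/dM))`. -/
theorem stmt_7
    (a q₁ c₁ d c₁M dM q₂ q₃ c₂ c₃ : ℝ)
    (ha : 0 < a) (hq₁ : 0 < q₁) (hc₁ : 0 < c₁) (hd : 0 < d)
    (hc₁M : 0 < c₁M) (hdM : 0 < dM) (hq₂ : 0 ≤ q₂) (hq₃ : 0 ≤ q₃)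
    (hc₂ : 0 ≤ c₂) (hc₃ : 0 ≤ c₃)
    (b₁ b₂ : ℝ)
    (hb₁ : b₁ = a / (a + q₁ + q₂ * (c₁ / d) + q₃ * (c₁M / dM)))
    (hb₂ : b₂ = c₁ * b₁ / (d * (1 + c₂ * (c₁ / d) + c₃ * (c₁M / dM))))
    (x₁ x₂ x₃ : ℝ → ℝ)
    (hx₂ : ∀ t ≥ (0:ℝ), HasDerivAt x₂
      (c₁ / (1 + c₂ * x₂ t + c₃ * x₃ t) * x₁ t - d * x₂ t) t)
    (hb : ∀ t ≥ (0:ℝ), x₁ t ∈ Icc b₁ 1 ∧ x₂ t ∈ Icc 0 (c₁ / d) ∧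
      x₃ t ∈ Icc 0 (c₁M / dM)) :
    ∀ t ≥ (0:ℝ), b₂ * (1 - Real.exp (-d * t))
      + x₂ 0 * Real.exp (-d * t) ≤ x₂ t := by
  refine comparison_of_hasDerivAt_ge hx₂ fun t ht => ?_
  obtain ⟨⟨hx₁, -⟩, ⟨hx₂₀, hx₂U⟩, ⟨hx₃₀, hx₃V⟩⟩ := hb t ht
  have hb₁₀ : 0 ≤ b₁ := by rw [hb₁]; positivity
  have hdb₂ : d * b₂ = c₁ * b₁ / (1 + c₂ * (c₁ / d) + c₃ * (c₁M / dM)) := by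
    rw [hb₂]; field_simp
  have hrate : d * b₂ ≤ c₁ / (1 + c₂ * x₂ t + c₃ * x₃ t) * x₁ t :=
    hdb₂ ▸ mul_div_le_div_mul_of_le hc₁.le
      (one_pos.trans_le (one_le_one_add_mul_add_mul hc₂ hc₃ hx₂₀ hx₃₀))
      (one_add_mul_add_mul_le hc₂ hc₃ hx₂U hx₃V) hb₁₀ hx₁
  linarith
end

section
/- The vector field g(·,0) has exactly one zero p = (p₁,p₂,p₃) in [0,∞)³. Moreover p₃ = 0 and p belongs to the compact set B. -/
open Set Real

set_option maxHeartbeats 1600000 in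
/-- the vector field `g(·,0)` has exactly one zero `p` in
`[0,∞)³`; moreover `p₃ = 0` and `p ∈ B`. -/
theorem stmt_8
    (a q₁ c₁ d c₁M dM q₂ q₃ c₂ c₃ c₂M c₃M : ℝ)
    (ha : 0 < a) (hq₁ : 0 < q₁) (hc₁ : 0 < c₁) (hd : 0 < d)
    (hc₁M : 0 < c₁M) (hdM : 0 < dM)
    (hq₂ : 0 ≤ q₂) (hq₃ : 0 ≤ q₃) (hc₂ : 0 ≤ c₂) (hc₃ : 0 ≤ c₃)
    (hc₂M : 0 ≤ c₂M) (hc₃M : 0 ≤ c₃M)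
    (g : ℝ × ℝ × ℝ → ℝ → ℝ × ℝ × ℝ)
    (hg : ∀ (x : ℝ × ℝ × ℝ) (i : ℝ), g x i =
      (a * (1 - x.1) - (q₁ + q₂ * x.2.1 + q₃ * x.2.2) * x.1,
       c₁ / (1 + c₂ * x.2.1 + c₃ * x.2.2) * x.1 - d * x.2.1,
       c₁M / (1 + c₂M * x.2.1 + c₃M * x.2.2) * i - dM * x.2.2))
    (b₁ B₁ b₂ : ℝ)
    (hb₁ : b₁ = a / (a + q₁ + q₂ * (c₁ / d) + q₃ * (c₁M / dM)))
    (hB₁ : B₁ = a / (a + q₁))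
    (hb₂ : b₂ = c₁ * b₁ / (d * (1 + c₂ * (c₁ / d) + c₃ * (c₁M / dM)))) :
    ∃ p : ℝ × ℝ × ℝ,
      (0 ≤ p.1 ∧ 0 ≤ p.2.1 ∧ 0 ≤ p.2.2) ∧ g p 0 = 0 ∧
      (∀ y : ℝ × ℝ × ℝ, 0 ≤ y.1 → 0 ≤ y.2.1 → 0 ≤ y.2.2 → g y 0 = 0 → y = p) ∧
      p.2.2 = 0 ∧
      p ∈ Icc b₁ B₁ ×ˢ Icc b₂ (c₁ / d) ×ˢ Icc 0 (c₁M / dM) := by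
  obtain ⟨F, hF⟩ : ∃ F : ℝ → ℝ,
      F = fun x => d * x * (1 + c₂ * x) * (a + q₁ + q₂ * x) - a * c₁ := ⟨_, rfl⟩
  have hcd : 0 < c₁ / d := div_pos hc₁ hd
  have hcdM : 0 < c₁M / dM := div_pos hc₁M hdM
  -- strict monotonicity of F on [0, ∞)
  have hmono : StrictMonoOn F (Ici (0:ℝ)) := by
    intro u hu v hv huv
    have hu' : (0:ℝ) ≤ u := hu
    have hv' : (0:ℝ) ≤ v := hv
    simp only [hF]
    have hEu : (0:ℝ) < 1 + c₂ * u := by positivity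
    have hDu : (0:ℝ) < a + q₁ + q₂ * u := by positivity
    have A : d * u < d * v := by nlinarith
    have step1 : d * u * (1 + c₂ * u) * (a + q₁ + q₂ * u)
        < d * v * (1 + c₂ * u) * (a + q₁ + q₂ * u) := by
      exact mul_lt_mul_of_pos_right (mul_lt_mul_of_pos_right A hEu) hDu
    have step2 : d * v * (1 + c₂ * u) * (a + q₁ + q₂ * u)
        ≤ d * v * (1 + c₂ * v) * (a + q₁ + q₂ * v) := by
      have h1 : 1 + c₂ * u ≤ 1 + c₂ * v := by nlinarith
      have h2 : a + q₁ + q₂ * u ≤ a + q₁ + q₂ * v := by nlinarith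
      have hdv : 0 ≤ d * v := by positivity
      have := mul_le_mul (mul_le_mul_of_nonneg_left h1 hdv) h2 hDu.le
        (by positivity)
      exact this
    linarith
  -- existence of a root of F in [0, c₁/d]
  have hF0 : F 0 = -(a * c₁) := by simp [hF]
  have hFcd : 0 ≤ F (c₁ / d) := by
    simp only [hF]
    rw [show d * (c₁ / d) = c₁ from by field_simp]
    nlinarith [mul_nonneg (mul_nonneg hc₂ hcd.le)
      (by positivity : (0:ℝ) ≤ a + q₁ + q₂ * (c₁ / d)),
      mul_nonneg hq₂ hcd.le]
  have hcont : ContinuousOn F (Icc 0 (c₁ / d)) := by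
    apply Continuous.continuousOn; simp only [hF]; continuity
  obtain ⟨x₂, hx₂mem, hx₂root⟩ : ∃ x₂ ∈ Icc (0:ℝ) (c₁/d), F x₂ = 0 := by
    have h0 : (0:ℝ) ∈ Icc (F 0) (F (c₁/d)) := ⟨by rw [hF0]; nlinarith, hFcd⟩
    obtain ⟨x, hx, hfx⟩ := intermediate_value_Icc hcd.le hcont h0
    exact ⟨x, hx, hfx⟩
  obtain ⟨hx₂0, hx₂cd⟩ := hx₂mem
  obtain ⟨D, hD⟩ : ∃ D : ℝ, D = a + q₁ + q₂ * x₂ := ⟨_, rfl⟩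
  have hDpos : 0 < D := by rw [hD]; positivity
  obtain ⟨x₁, hx₁⟩ : ∃ x₁ : ℝ, x₁ = a / D := ⟨_, rfl⟩
  have hx₁pos : 0 < x₁ := by rw [hx₁]; exact div_pos ha hDpos
  have hEpos : (0:ℝ) < 1 + c₂ * x₂ := by positivity
  have hx₁D : x₁ * D = a := by rw [hx₁]; field_simp
  have hkey : d * x₂ * (1 + c₂ * x₂) * D = a * c₁ := by
    have h := hx₂root; rw [hF] at h; simp only at h; rw [hD]; linarith
  have h2 : c₁ * x₁ = d * x₂ * (1 + c₂ * x₂) := by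
    have hx : D * (c₁ * x₁) = D * (d * x₂ * (1 + c₂ * x₂)) := by
      linear_combination c₁ * hx₁D - hkey
    exact mul_left_cancel₀ hDpos.ne' hx
  -- bounds on x₁
  have hDb : D ≤ a + q₁ + q₂ * (c₁ / d) + q₃ * (c₁M / dM) := by
    rw [hD]
    nlinarith [mul_le_mul_of_nonneg_left hx₂cd hq₂, mul_nonneg hq₃ hcdM.le]
  have hx₁B : x₁ ≤ B₁ := by
    rw [hB₁, hx₁]
    apply div_le_div_of_nonneg_left ha.le (by positivity)
    rw [hD]; nlinarith [mul_nonneg hq₂ hx₂0]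
  have hx₁b : b₁ ≤ x₁ := by
    rw [hb₁, hx₁]
    apply div_le_div_of_nonneg_left ha.le hDpos hDb
  have hb₁pos : 0 < b₁ := by
    rw [hb₁]
    apply div_pos ha
    positivity
  -- lower bound x₂ ≥ b₂
  have hx₂b : b₂ ≤ x₂ := by
    have hden : (0:ℝ) < d * (1 + c₂ * (c₁ / d) + c₃ * (c₁M / dM)) := by positivity
    rw [hb₂, div_le_iff₀ hden]
    have hbx : c₁ * b₁ ≤ c₁ * x₁ := by nlinarith
    have hEE : c₂ * x₂ ≤ c₂ * (c₁ / d) + c₃ * (c₁M / dM) := by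
      nlinarith [mul_le_mul_of_nonneg_left hx₂cd hc₂, mul_nonneg hc₃ hcdM.le]
    nlinarith [mul_le_mul_of_nonneg_left hEE (mul_nonneg hd.le hx₂0)]
  refine ⟨(x₁, x₂, 0), ⟨hx₁pos.le, hx₂0, le_refl 0⟩, ?_, ?_, rfl,
    ⟨⟨hx₁b, hx₁B⟩, ⟨hx₂b, hx₂cd⟩, ⟨le_refl 0, hcdM.le⟩⟩⟩
  · -- g p 0 = 0
    rw [hg]
    have hne : (1 + c₂ * x₂ + c₃ * 0) ≠ 0 := by
      simp only [mul_zero, add_zero]; exact hEpos.ne'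
    have comp1 : a * (1 - x₁) - (q₁ + q₂ * x₂ + q₃ * 0) * x₁ = 0 := by
      rw [hD] at hx₁D; linear_combination -hx₁D
    have comp2 : c₁ / (1 + c₂ * x₂ + c₃ * 0) * x₁ - d * x₂ = 0 := by
      field_simp
      linear_combination h2
    simp only [Prod.ext_iff, Prod.fst_zero, Prod.snd_zero]
    exact ⟨comp1, comp2, by ring⟩
  · -- uniqueness
    intro y hy1 hy2 hy3 hgy
    rw [hg] at hgy
    have hgy1 : a * (1 - y.1) - (q₁ + q₂ * y.2.1 + q₃ * y.2.2) * y.1 = 0 :=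
      congrArg Prod.fst hgy
    have hgy2 : c₁ / (1 + c₂ * y.2.1 + c₃ * y.2.2) * y.1 - d * y.2.1 = 0 :=
      congrArg (Prod.fst ∘ Prod.snd) hgy
    have hgy3 : c₁M / (1 + c₂M * y.2.1 + c₃M * y.2.2) * 0 - dM * y.2.2 = 0 :=
      congrArg (Prod.snd ∘ Prod.snd) hgy
    have hy3' : y.2.2 = 0 := by
      rw [mul_zero] at hgy3
      have : dM * y.2.2 = 0 := by linarith
      rcases mul_eq_zero.mp this with h | h
      · exact absurd h hdM.ne'
      · exact h
    rw [hy3'] at hgy1 hgy2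
    have hEy : (0:ℝ) < 1 + c₂ * y.2.1 + c₃ * 0 := by positivity
    have hDy : (0:ℝ) < a + q₁ + q₂ * y.2.1 := by positivity
    have hy1D : y.1 * (a + q₁ + q₂ * y.2.1) = a := by linear_combination -hgy1
    have hy2eq : c₁ * y.1 = d * y.2.1 * (1 + c₂ * y.2.1) := by
      field_simp at hgy2
      linear_combination hgy2
    have hFy : F y.2.1 = 0 := by
      simp only [hF]
      linear_combination (a + q₁ + q₂ * y.2.1) * hy2eq.symm + c₁ * hy1D
    have hy2' : y.2.1 = x₂ := hmono.injOn hy2 hx₂0 (hFy.trans hx₂root.symm)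
    have hy1' : y.1 = x₁ := by
      rw [hx₁, hD, ← hy2', eq_div_iff (by rw [hy2'] at hDy ⊢; exact hDy.ne')]
      exact hy1D
    exact Prod.ext hy1' (Prod.ext hy2' hy3')
end

section
/- Assume q₂ = 0. Set p₁ = a/(a+q₁), and set p₂ = (c₁/d)·p₁ if c₂ = 0, while p₂ = (−d + √(d(d + 4c₁c₂p₁)))/(2d·c₂) if c₂ > 0. Then (p₁, p₂, 0) is the unique zero of the vector field g(·,0) in [0,∞)³. -/
/-!
With `i = 0` the third equation forces `x₃ = 0`; with `q₂ = 0` and `x₃ = 0` the first equation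
is linear in `x₁`, giving `x₁ = p₁`. The second then reads `d x₂ (1 + c₂ x₂) = c₁ p₁`, whose
left side is strictly increasing on `[0, ∞)`, and `p₂` is its nonnegative solution: linear if
`c₂ = 0`, the positive root of the quadratic if `c₂ > 0`.
-/

open Set Real

lemma strictMonoOn_mul_mul_one_add_mul {d c : ℝ} (hd : 0 < d) (hc : 0 ≤ c) :
    StrictMonoOn (fun x : ℝ => d * x * (1 + c * x)) (Ici 0) := by
  intro x hx y hy hxy
  simp only [mem_Ici] at hx hy
  have hpos : 0 < d * (y - x) * (1 + c * (x + y)) := by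
    have : 0 ≤ c * (x + y) := by positivity
    exact mul_pos (mul_pos hd (sub_pos.2 hxy)) (by linarith)
  linarith [show d * y * (1 + c * y) - d * x * (1 + c * x) = d * (y - x) * (1 + c * (x + y)) by
    ring]

lemma quadratic_root_nonneg_and_eq {d c b x : ℝ} (hd : 0 < d) (hc : 0 < c) (hb : 0 ≤ b)
    (hx : x = (-d + √(d * (d + 4 * c * b))) / (2 * d * c)) :
    0 ≤ x ∧ d * x * (1 + c * x) = b := by
  set s := √(d * (d + 4 * c * b))
  have hs_sq : s ^ 2 = d * (d + 4 * c * b) := sq_sqrt (by positivity)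
  have hd_le_s : d ≤ s := by
    nlinarith [sqrt_nonneg (d * (d + 4 * c * b)), mul_nonneg (mul_nonneg hd.le hc.le) hb]
  subst hx
  refine ⟨div_nonneg (by linarith) (by positivity), ?_⟩
  field_simp
  linear_combination hs_sq

lemma eq_div_add_of_mul_one_sub_sub_mul_eq_zero {a q y : ℝ} (haq : a + q ≠ 0)
    (h : a * (1 - y) - q * y = 0) : y = a / (a + q) := by
  rw [eq_div_iff haq]
  linear_combination -h

theorem stmt_9_general
    (a q₁ c₁ d c₁M dM q₂ q₃ c₂ c₃ c₂M c₃M : ℝ)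
    (ha : 0 < a) (hq₁ : 0 < q₁) (hc₁ : 0 < c₁) (hd : 0 < d)
    (hdM : 0 < dM) (hc₂ : 0 ≤ c₂)
    (g : ℝ × ℝ × ℝ → ℝ → ℝ × ℝ × ℝ)
    (hg : ∀ (x : ℝ × ℝ × ℝ) (i : ℝ), g x i =
      (a * (1 - x.1) - (q₁ + q₂ * x.2.1 + q₃ * x.2.2) * x.1,
       c₁ / (1 + c₂ * x.2.1 + c₃ * x.2.2) * x.1 - d * x.2.1,
       c₁M / (1 + c₂M * x.2.1 + c₃M * x.2.2) * i - dM * x.2.2))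
    (hq₂0 : q₂ = 0)
    (p₁ p₂ : ℝ) (hp₁ : p₁ = a / (a + q₁))
    (hp₂0 : c₂ = 0 → p₂ = c₁ / d * p₁)
    (hp₂1 : 0 < c₂ → p₂ = (-d + Real.sqrt (d * (d + 4 * c₁ * c₂ * p₁)))
      / (2 * d * c₂)) :
    g (p₁, p₂, 0) 0 = 0 ∧
    ∀ y : ℝ × ℝ × ℝ, 0 ≤ y.1 → 0 ≤ y.2.1 → 0 ≤ y.2.2 → g y 0 = 0 →
      y = (p₁, p₂, 0) := by
  have haq : 0 < a + q₁ := by linarith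
  have hp₁_pos : 0 < p₁ := hp₁ ▸ div_pos ha haq
  obtain ⟨hp₂_nonneg, hp₂_eq⟩ : 0 ≤ p₂ ∧ d * p₂ * (1 + c₂ * p₂) = c₁ * p₁ := by
    rcases hc₂.eq_or_lt with hc₂0 | hc₂_pos
    · rw [hp₂0 hc₂0.symm, ← hc₂0]
      exact ⟨by positivity, by field_simp; ring⟩
    · refine quadratic_root_nonneg_and_eq hd hc₂_pos (by positivity) ?_
      rw [hp₂1 hc₂_pos]; ring_nf
  have hp₂_den : 1 + c₂ * p₂ ≠ 0 := by positivity
  refine ⟨?_, ?_⟩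
  · simp only [hg, hq₂0, Prod.mk_eq_zero]
    refine ⟨?_, ?_, by ring⟩
    · rw [hp₁]; field_simp; ring
    · rw [mul_zero, add_zero]; field_simp; linarith
  · rintro ⟨y₁, y₂, y₃⟩ - (hy₂ : 0 ≤ y₂) - hy
    simp only [hg, hq₂0, Prod.mk_eq_zero, mul_zero, zero_sub, neg_eq_zero,
      mul_eq_zero, hdM.ne', false_or] at hy
    obtain ⟨h₁, h₂, rfl⟩ := hy
    have hy₁ : y₁ = p₁ :=
      hp₁ ▸ eq_div_add_of_mul_one_sub_sub_mul_eq_zero haq.ne' (by simpa using h₁)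
    subst hy₁
    have hy₂_den : 1 + c₂ * y₂ ≠ 0 := by positivity
    have hy₂ : y₂ = p₂ := by
      refine (strictMonoOn_mul_mul_one_add_mul hd hc₂).injOn hy₂ hp₂_nonneg ?_
      simp only [mul_zero, add_zero] at h₂
      field_simp at h₂
      linarith
    rw [hy₂]

/-- the unique nonnegative zero of `g(·,0)` when `q₂ = 0`. -/
theorem stmt_9
    (a q₁ c₁ d c₁M dM q₂ q₃ c₂ c₃ c₂M c₃M : ℝ)
    (ha : 0 < a) (hq₁ : 0 < q₁) (hc₁ : 0 < c₁) (hd : 0 < d)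
    (hc₁M : 0 < c₁M) (hdM : 0 < dM)
    (hq₂ : 0 ≤ q₂) (hq₃ : 0 ≤ q₃) (hc₂ : 0 ≤ c₂) (hc₃ : 0 ≤ c₃)
    (hc₂M : 0 ≤ c₂M) (hc₃M : 0 ≤ c₃M)
    (g : ℝ × ℝ × ℝ → ℝ → ℝ × ℝ × ℝ)
    (hg : ∀ (x : ℝ × ℝ × ℝ) (i : ℝ), g x i =
      (a * (1 - x.1) - (q₁ + q₂ * x.2.1 + q₃ * x.2.2) * x.1,
       c₁ / (1 + c₂ * x.2.1 + c₃ * x.2.2) * x.1 - d * x.2.1,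
       c₁M / (1 + c₂M * x.2.1 + c₃M * x.2.2) * i - dM * x.2.2))
    (hq₂0 : q₂ = 0)
    (p₁ p₂ : ℝ) (hp₁ : p₁ = a / (a + q₁))
    (hp₂0 : c₂ = 0 → p₂ = c₁ / d * p₁)
    (hp₂1 : 0 < c₂ → p₂ = (-d + Real.sqrt (d * (d + 4 * c₁ * c₂ * p₁)))
      / (2 * d * c₂)) :
    g (p₁, p₂, 0) 0 = 0 ∧
    ∀ y : ℝ × ℝ × ℝ, 0 ≤ y.1 → 0 ≤ y.2.1 → 0 ≤ y.2.2 → g y 0 = 0 →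
      y = (p₁, p₂, 0) :=
  stmt_9_general a q₁ c₁ d c₁M dM q₂ q₃ c₂ c₃ c₂M c₃M ha hq₁ hc₁ hd hdM hc₂ g hg hq₂0 p₁ p₂ hp₁ hp₂0
    hp₂1
end

section
/- Assume q₂ > 0 and c₂ = 0. Set p₁ = (d/(2q₂c₁))·(√((a+q₁)² + 4aq₂c₁/d) − (a+q₁)) and p₂ = (c₁/d)·p₁. Then (p₁, p₂, 0) is the unique zero of the vector field g(·,0) in [0,∞)³. -/
open Set Real

/-! With `c₂ = 0` the third component forces `x₃ = 0`, the second gives `x₂ = (c₁/d) x₁`,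
and substituting into the first leaves the quadratic `(q₂c₁/d) x₁² + (a+q₁) x₁ - a = 0`.
Its roots have product `-a d/(q₂c₁) < 0`, so exactly one is nonnegative, and the quadratic
formula identifies it with `p₁`. -/

lemma quadratic_root_pos {A B C : ℝ} (hA : 0 < A) (hB : 0 < B) (hC : C < 0) :
    0 < (-B + √(discrim A B C)) / (2 * A) := by
  have hB_lt : B < √(discrim A B C) :=
    (Real.lt_sqrt hB.le).2 (by unfold discrim; nlinarith)
  exact div_pos (by linarith) (by positivity)

lemma quadratic_eq_zero_iff_of_nonneg {A B C x : ℝ} (hA : 0 < A) (hB : 0 < B)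
    (hdisc : 0 ≤ discrim A B C) (hx : 0 ≤ x) :
    A * (x * x) + B * x + C = 0 ↔ x = (-B + √(discrim A B C)) / (2 * A) := by
  rw [quadratic_eq_zero_iff hA.ne' (Real.mul_self_sqrt hdisc).symm, or_iff_left]
  rintro rfl
  rw [← neg_add', neg_div, neg_nonneg] at hx
  exact hx.not_gt (by positivity)

section SteadyState

variable {a q₁ c₁ d dM q₂ q₃ c₃ c₁M c₂M c₃M : ℝ}

lemma steady_state_iff (hd : d ≠ 0) (hdM : dM ≠ 0) (x₁ x₂ x₃ : ℝ) :
    (a * (1 - x₁) - (q₁ + q₂ * x₂ + q₃ * x₃) * x₁,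
      c₁ / (1 + 0 * x₂ + c₃ * x₃) * x₁ - d * x₂,
      c₁M / (1 + c₂M * x₂ + c₃M * x₃) * 0 - dM * x₃) = 0 ↔
    x₃ = 0 ∧ x₂ = c₁ / d * x₁ ∧ q₂ * c₁ / d * (x₁ * x₁) + (a + q₁) * x₁ + -a = 0 := by
  simp only [Prod.mk_eq_zero, mul_zero, zero_sub, neg_eq_zero, mul_eq_zero, hdM, false_or,
    zero_mul, add_zero]
  constructor
  · rintro ⟨h₁, h₂, rfl⟩
    simp only [mul_zero, add_zero, div_one] at h₁ h₂
    have hx₂ : x₂ = c₁ / d * x₁ := by field_simp; linarith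
    refine ⟨rfl, hx₂, ?_⟩
    subst hx₂
    field_simp at h₁ ⊢
    linear_combination -h₁
  · rintro ⟨rfl, rfl, h⟩
    simp only [mul_zero, add_zero, div_one]
    refine ⟨?_, by field_simp; ring, trivial⟩
    field_simp at h ⊢
    linear_combination -h

end SteadyState

theorem stmt_10_general
    (a q₁ c₁ d c₁M dM q₂ q₃ c₂ c₃ c₂M c₃M : ℝ)
    (ha : 0 < a) (hq₁ : 0 < q₁) (hc₁ : 0 < c₁) (hd : 0 < d)
    (hdM : 0 < dM)
    (g : ℝ × ℝ × ℝ → ℝ → ℝ × ℝ × ℝ)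
    (hg : ∀ (x : ℝ × ℝ × ℝ) (i : ℝ), g x i =
      (a * (1 - x.1) - (q₁ + q₂ * x.2.1 + q₃ * x.2.2) * x.1,
       c₁ / (1 + c₂ * x.2.1 + c₃ * x.2.2) * x.1 - d * x.2.1,
       c₁M / (1 + c₂M * x.2.1 + c₃M * x.2.2) * i - dM * x.2.2))
    (hq₂pos : 0 < q₂) (hc₂0 : c₂ = 0)
    (p₁ p₂ : ℝ)
    (hp₁ : p₁ = d / (2 * q₂ * c₁) *
      (Real.sqrt ((a + q₁) ^ 2 + 4 * a * q₂ * c₁ / d) - (a + q₁)))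
    (hp₂ : p₂ = c₁ / d * p₁) :
    g (p₁, p₂, 0) 0 = 0 ∧
    ∀ y : ℝ × ℝ × ℝ, 0 ≤ y.1 → 0 ≤ y.2.1 → 0 ≤ y.2.2 → g y 0 = 0 →
      y = (p₁, p₂, 0) := by
  subst hc₂0
  have hA : 0 < q₂ * c₁ / d := by positivity
  have hB : 0 < a + q₁ := by linarith
  have hdisc : discrim (q₂ * c₁ / d) (a + q₁) (-a) = (a + q₁) ^ 2 + 4 * a * q₂ * c₁ / d := by
    unfold discrim; ring
  have hp₁_root : p₁ = (-(a + q₁) + √(discrim (q₂ * c₁ / d) (a + q₁) (-a))) /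
      (2 * (q₂ * c₁ / d)) := by
    rw [hp₁, hdisc]; field_simp; ring
  have hp₁_pos : 0 < p₁ := hp₁_root ▸ quadratic_root_pos hA hB (by linarith)
  have hroot_iff := fun x ↦ quadratic_eq_zero_iff_of_nonneg (x := x) hA hB
    (by rw [hdisc]; positivity)
  refine ⟨?_, ?_⟩
  · rw [hg, steady_state_iff hd.ne' hdM.ne']
    exact ⟨rfl, hp₂, (hroot_iff p₁ hp₁_pos.le).2 hp₁_root⟩
  · rintro ⟨y₁, y₂, y₃⟩ hy₁ - - hy
    rw [hg] at hy
    dsimp only at hy₁ hy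
    obtain ⟨rfl, rfl, hquad⟩ := (steady_state_iff hd.ne' hdM.ne' _ _ _).1 hy
    rw [(hroot_iff y₁ hy₁).1 hquad, ← hp₁_root, hp₂]

/-- the unique nonnegative zero of `g(·,0)` when `q₂ > 0` and
`c₂ = 0`. -/
theorem stmt_10
    (a q₁ c₁ d c₁M dM q₂ q₃ c₂ c₃ c₂M c₃M : ℝ)
    (ha : 0 < a) (hq₁ : 0 < q₁) (hc₁ : 0 < c₁) (hd : 0 < d)
    (hc₁M : 0 < c₁M) (hdM : 0 < dM)
    (hq₂ : 0 ≤ q₂) (hq₃ : 0 ≤ q₃) (hc₂ : 0 ≤ c₂) (hc₃ : 0 ≤ c₃)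
    (hc₂M : 0 ≤ c₂M) (hc₃M : 0 ≤ c₃M)
    (g : ℝ × ℝ × ℝ → ℝ → ℝ × ℝ × ℝ)
    (hg : ∀ (x : ℝ × ℝ × ℝ) (i : ℝ), g x i =
      (a * (1 - x.1) - (q₁ + q₂ * x.2.1 + q₃ * x.2.2) * x.1,
       c₁ / (1 + c₂ * x.2.1 + c₃ * x.2.2) * x.1 - d * x.2.1,
       c₁M / (1 + c₂M * x.2.1 + c₃M * x.2.2) * i - dM * x.2.2))
    (hq₂pos : 0 < q₂) (hc₂0 : c₂ = 0)
    (p₁ p₂ : ℝ)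
    (hp₁ : p₁ = d / (2 * q₂ * c₁) *
      (Real.sqrt ((a + q₁) ^ 2 + 4 * a * q₂ * c₁ / d) - (a + q₁)))
    (hp₂ : p₂ = c₁ / d * p₁) :
    g (p₁, p₂, 0) 0 = 0 ∧
    ∀ y : ℝ × ℝ × ℝ, 0 ≤ y.1 → 0 ≤ y.2.1 → 0 ≤ y.2.2 → g y 0 = 0 →
      y = (p₁, p₂, 0) :=
  stmt_10_general a q₁ c₁ d c₁M dM q₂ q₃ c₂ c₃ c₂M c₃M ha hq₁ hc₁ hd hdM g hg hq₂pos hc₂0 p₁ p₂ hp₁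
    hp₂
end

section
/- Assume q₂ > 0 and c₂ > 0. Define F : [0,1] → ℝ by F(s) = 2dc₂a/(2dc₂(a+q₁) + q₂(√(d(d + 4c₁c₂s)) − d)). Then F is strictly decreasing on [0,1] with values in (0, a/(a+q₁)], F has a unique fixed point p₁ ∈ (0,1), and, setting p₂ = (−d + √(d(d + 4c₁c₂p₁)))/(2d·c₂), the point (p₁, p₂, 0) is the unique zero of the vector field g(·,0) in [0,∞)³. -/
open Set Real

/-! Eliminating `x₂` from `g(x, 0) = 0` leaves the nonnegative root `x₂ = φ(x₁)` of
`d c₂ x₂² + d x₂ = c₁ x₁` and then the fixed-point equation `x₁ = a / (a + q₁ + q₂ φ(x₁)) = F(x₁)`.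
As `φ` is increasing, `F` is decreasing; `F 0 = a / (a + q₁) ∈ (0, 1)`, so `F` has exactly one
fixed point, and it lies in `(0, 1)`. -/

lemma StrictAntiOn.eq_of_fixed {f : ℝ → ℝ} {S : Set ℝ} (hf : StrictAntiOn f S) {x y : ℝ}
    (hx : x ∈ S) (hy : y ∈ S) (hfx : f x = x) (hfy : f y = y) : x = y := by
  by_contra hne
  rcases lt_or_gt_of_ne hne with h | h
  · have := hf hx hy h
    linarith
  · have := hf hy hx h
    linarith

lemma exists_mem_Ioo_fixed_of_continuousOn {f : ℝ → ℝ} {u v : ℝ} (huv : u ≤ v)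
    (hf : ContinuousOn f (Icc u v)) (hu : u < f u) (hv : f v < v) :
    ∃ p ∈ Ioo u v, f p = p := by
  obtain ⟨p, hp, hfp⟩ := intermediate_value_Ioo' huv (hf.sub continuousOn_id)
    (show (0 : ℝ) ∈ Ioo (f v - v) (f u - u) from ⟨by linarith, by linarith⟩)
  exact ⟨p, hp, sub_eq_zero.1 hfp⟩

/-- The nonnegative root `x₂` of `d c₂ x₂² + d x₂ = c₁ s`. -/
noncomputable def x₂Steady (d c₁ c₂ s : ℝ) : ℝ :=
  (-d + √(d * (d + 4 * c₁ * c₂ * s))) / (2 * d * c₂)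

section x₂Steady

variable {d c₁ c₂ : ℝ}

lemma sqrt_eq_x₂Steady (hd : d ≠ 0) (hc₂ : c₂ ≠ 0) (s : ℝ) :
    √(d * (d + 4 * c₁ * c₂ * s)) = 2 * d * c₂ * x₂Steady d c₁ c₂ s + d := by
  unfold x₂Steady
  field_simp
  ring

lemma x₂Steady_zero (hd : 0 ≤ d) : x₂Steady d c₁ c₂ 0 = 0 := by
  simp [x₂Steady, ← sq, hd]

lemma continuous_x₂Steady : Continuous (x₂Steady d c₁ c₂) := by
  unfold x₂Steady
  fun_prop

lemma strictMonoOn_x₂Steady (hd : 0 < d) (hc₁ : 0 < c₁) (hc₂ : 0 < c₂) :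
    StrictMonoOn (x₂Steady d c₁ c₂) (Ici 0) := by
  intro s (hs : 0 ≤ s) t _ hst
  unfold x₂Steady
  gcongr

lemma x₂Steady_nonneg (hd : 0 ≤ d) (hc₁ : 0 ≤ c₁) (hc₂ : 0 ≤ c₂) {s : ℝ} (hs : 0 ≤ s) :
    0 ≤ x₂Steady d c₁ c₂ s := by
  have : 0 ≤ d * (4 * c₁ * c₂ * s) := by positivity
  have hle : d ≤ √(d * (d + 4 * c₁ * c₂ * s)) := le_sqrt_of_sq_le (by linear_combination this)
  unfold x₂Steady
  exact div_nonneg (by linarith) (by positivity)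

lemma eq_x₂Steady_iff (hd : 0 < d) (hc₁ : 0 ≤ c₁) (hc₂ : 0 < c₂) {s y : ℝ} (hs : 0 ≤ s)
    (hy : 0 ≤ y) : y = x₂Steady d c₁ c₂ s ↔ d * y * (1 + c₂ * y) = c₁ * s := by
  constructor
  · rintro rfl
    have hsq := sq_sqrt (show 0 ≤ d * (d + 4 * c₁ * c₂ * s) by positivity)
    rw [sqrt_eq_x₂Steady hd.ne' hc₂.ne'] at hsq
    refine mul_left_cancel₀ (by positivity : 4 * d * c₂ ≠ 0) ?_
    linear_combination hsq
  · intro h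
    have hsq : d * (d + 4 * c₁ * c₂ * s) = (2 * d * c₂ * y + d) ^ 2 := by
      linear_combination -(4 * d * c₂) * h
    rw [x₂Steady, hsq, sqrt_sq (by positivity)]
    field_simp
    ring

lemma two_mul_div_eq_div_x₂Steady (hd : d ≠ 0) (hc₂ : c₂ ≠ 0) (a b q s : ℝ) :
    2 * d * c₂ * a / (2 * d * c₂ * b + q * (√(d * (d + 4 * c₁ * c₂ * s)) - d)) =
      a / (b + q * x₂Steady d c₁ c₂ s) := by
  rw [sqrt_eq_x₂Steady hd hc₂,
    show 2 * d * c₂ * b + q * (2 * d * c₂ * x₂Steady d c₁ c₂ s + d - d) =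
      2 * d * c₂ * (b + q * x₂Steady d c₁ c₂ s) by ring]
  exact mul_div_mul_left _ _ (by simp [hd, hc₂])

lemma strictAntiOn_div_add_x₂Steady {a b q : ℝ} (ha : 0 < a) (hb : 0 < b) (hq : 0 < q)
    (hd : 0 < d) (hc₁ : 0 < c₁) (hc₂ : 0 < c₂) :
    StrictAntiOn (fun s ↦ a / (b + q * x₂Steady d c₁ c₂ s)) (Ici 0) := by
  intro s hs t ht hst
  have := x₂Steady_nonneg hd.le hc₁.le hc₂.le hs
  have := strictMonoOn_x₂Steady hd hc₁ hc₂ hs ht hst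
  exact div_lt_div_of_pos_left ha (by positivity) (by gcongr)

lemma continuousOn_div_add_x₂Steady {a b q : ℝ} (hb : 0 < b) (hq : 0 ≤ q) (hd : 0 ≤ d)
    (hc₁ : 0 ≤ c₁) (hc₂ : 0 ≤ c₂) :
    ContinuousOn (fun s ↦ a / (b + q * x₂Steady d c₁ c₂ s)) (Ici 0) := by
  have := continuous_x₂Steady (d := d) (c₁ := c₁) (c₂ := c₂)
  refine continuousOn_const.div (by fun_prop) fun s hs ↦ ?_
  have := x₂Steady_nonneg hd hc₁ hc₂ hs
  positivity

end x₂Steady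

/-- The vector field `g` of the model. -/
noncomputable def vectorField (a q₁ q₂ q₃ c₁ c₂ c₃ d c₁M c₂M c₃M dM : ℝ) (x : ℝ × ℝ × ℝ)
    (i : ℝ) : ℝ × ℝ × ℝ :=
  (a * (1 - x.1) - (q₁ + q₂ * x.2.1 + q₃ * x.2.2) * x.1,
   c₁ / (1 + c₂ * x.2.1 + c₃ * x.2.2) * x.1 - d * x.2.1,
   c₁M / (1 + c₂M * x.2.1 + c₃M * x.2.2) * i - dM * x.2.2)

lemma vectorField_eq_zero_iff {a q₁ q₂ q₃ c₁ c₂ c₃ d c₁M c₂M c₃M dM : ℝ} (ha : 0 < a)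
    (hq₁ : 0 ≤ q₁) (hq₂ : 0 ≤ q₂) (hc₁ : 0 ≤ c₁) (hc₂ : 0 < c₂) (hd : 0 < d) (hdM : dM ≠ 0)
    {y₁ y₂ y₃ : ℝ} (hy₁ : 0 ≤ y₁) (hy₂ : 0 ≤ y₂) :
    vectorField a q₁ q₂ q₃ c₁ c₂ c₃ d c₁M c₂M c₃M dM (y₁, y₂, y₃) 0 = 0 ↔
      y₃ = 0 ∧ y₂ = x₂Steady d c₁ c₂ y₁ ∧ a / (a + q₁ + q₂ * x₂Steady d c₁ c₂ y₁) = y₁ := by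
  have hpos : 0 < a + q₁ + q₂ * y₂ := by positivity
  have hy₂_iff : c₁ / (1 + c₂ * y₂) * y₁ - d * y₂ = 0 ↔ y₂ = x₂Steady d c₁ c₂ y₁ := by
    rw [eq_x₂Steady_iff hd hc₁ hc₂ hy₁ hy₂, sub_eq_zero, div_mul_eq_mul_div,
      div_eq_iff (by positivity), eq_comm]
  simp only [vectorField, Prod.mk_eq_zero, mul_zero, zero_sub, neg_eq_zero, mul_eq_zero, hdM,
    false_or]
  constructor
  · rintro ⟨hx₁, hx₂, rfl⟩
    simp only [mul_zero, add_zero] at hx₁ hx₂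
    obtain rfl := hy₂_iff.1 hx₂
    refine ⟨rfl, rfl, ?_⟩
    rw [div_eq_iff hpos.ne']
    linear_combination hx₁
  · rintro ⟨rfl, hy₂φ, hfix⟩
    rw [← hy₂φ, div_eq_iff hpos.ne'] at hfix
    simp only [mul_zero, add_zero]
    exact ⟨by linear_combination hfix, hy₂_iff.2 hy₂φ, trivial⟩

theorem stmt_11_general
    (a q₁ c₁ d c₁M dM q₂ q₃ c₂ c₃ c₂M c₃M : ℝ)
    (ha : 0 < a) (hq₁ : 0 < q₁) (hc₁ : 0 < c₁) (hd : 0 < d)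
    (hdM : 0 < dM)
    (g : ℝ × ℝ × ℝ → ℝ → ℝ × ℝ × ℝ)
    (hg : ∀ (x : ℝ × ℝ × ℝ) (i : ℝ), g x i =
      (a * (1 - x.1) - (q₁ + q₂ * x.2.1 + q₃ * x.2.2) * x.1,
       c₁ / (1 + c₂ * x.2.1 + c₃ * x.2.2) * x.1 - d * x.2.1,
       c₁M / (1 + c₂M * x.2.1 + c₃M * x.2.2) * i - dM * x.2.2))
    (hq₂pos : 0 < q₂) (hc₂pos : 0 < c₂)
    (F : ℝ → ℝ)
    (hF : ∀ s, F s = 2 * d * c₂ * a /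
      (2 * d * c₂ * (a + q₁) + q₂ * (Real.sqrt (d * (d + 4 * c₁ * c₂ * s)) - d))) :
    StrictAntiOn F (Icc 0 1) ∧
    (∀ s ∈ Icc (0:ℝ) 1, F s ∈ Ioc 0 (a / (a + q₁))) ∧
    ∃ p₁ ∈ Ioo (0:ℝ) 1, F p₁ = p₁ ∧
      (∀ s ∈ Ioo (0:ℝ) 1, F s = s → s = p₁) ∧
      g (p₁, (-d + Real.sqrt (d * (d + 4 * c₁ * c₂ * p₁))) / (2 * d * c₂), 0) 0
        = 0 ∧
      ∀ y : ℝ × ℝ × ℝ, 0 ≤ y.1 → 0 ≤ y.2.1 → 0 ≤ y.2.2 → g y 0 = 0 →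
        y = (p₁, (-d + Real.sqrt (d * (d + 4 * c₁ * c₂ * p₁))) / (2 * d * c₂), 0) := by
  set φ := x₂Steady d c₁ c₂
  have hFφ : F = fun s ↦ a / (a + q₁ + q₂ * φ s) :=
    funext fun s ↦ (hF s).trans (two_mul_div_eq_div_x₂Steady hd.ne' hc₂pos.ne' _ _ _ _)
  have hgzero : ∀ y₁ y₂ y₃ : ℝ, 0 ≤ y₁ → 0 ≤ y₂ →
      (g (y₁, y₂, y₃) 0 = 0 ↔ y₃ = 0 ∧ y₂ = φ y₁ ∧ F y₁ = y₁) := fun _ _ _ hy₁ hy₂ ↦ by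
    rw [hg, hFφ]
    exact vectorField_eq_zero_iff ha hq₁.le hq₂pos.le hc₁.le hc₂pos hd hdM.ne' hy₁ hy₂
  have hanti : StrictAntiOn F (Ici 0) :=
    hFφ ▸ strictAntiOn_div_add_x₂Steady ha (by positivity) hq₂pos hd hc₁ hc₂pos
  have hF0 : F 0 = a / (a + q₁) := by simp [hFφ, φ, x₂Steady_zero hd.le]
  have hrange : ∀ s ∈ Ici (0:ℝ), F s ∈ Ioc 0 (a / (a + q₁)) := fun s hs ↦
    ⟨by have := x₂Steady_nonneg hd.le hc₁.le hc₂pos.le hs; rw [hFφ]; positivity,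
      hF0 ▸ hanti.antitoneOn self_mem_Ici hs hs⟩
  have hF1 : F 1 < 1 :=
    (hanti self_mem_Ici (mem_Ici.2 zero_le_one) zero_lt_one).trans
      (by rw [hF0, div_lt_one (by positivity)]; linarith)
  obtain ⟨p₁, hp₁, hfix⟩ : ∃ p ∈ Ioo (0:ℝ) 1, F p = p :=
    exists_mem_Ioo_fixed_of_continuousOn zero_le_one
      (hFφ ▸ (continuousOn_div_add_x₂Steady (by positivity) hq₂pos.le hd.le hc₁.le
        hc₂pos.le).mono Icc_subset_Ici_self)
      (hrange 0 self_mem_Ici).1 hF1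
  have huniq : ∀ s ∈ Ici (0:ℝ), F s = s → s = p₁ := fun s hs hs' ↦
    hanti.eq_of_fixed hs (mem_Ici.2 hp₁.1.le) hs' hfix
  refine ⟨hanti.mono Icc_subset_Ici_self, fun s hs ↦ hrange s hs.1, p₁, hp₁, hfix,
    fun s hs ↦ huniq s hs.1.le, ?_, ?_⟩
  · exact (hgzero _ _ _ hp₁.1.le (x₂Steady_nonneg hd.le hc₁.le hc₂pos.le hp₁.1.le)).2
      ⟨rfl, rfl, hfix⟩
  · rintro ⟨y₁, y₂, y₃⟩ hy₁ hy₂ - hy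
    obtain ⟨rfl, rfl, hfy⟩ := (hgzero y₁ y₂ y₃ hy₁ hy₂).1 hy
    rw [huniq y₁ hy₁ hfy]
    rfl

/-- when `q₂ > 0` and `c₂ > 0`, the map
`F(s) = 2dc₂a/(2dc₂(a+q₁) + q₂(√(d(d+4c₁c₂s)) − d))` is strictly decreasing on
`[0,1]` with values in `(0, a/(a+q₁)]`, it has a unique fixed point
`p₁ ∈ (0,1)`, and `(p₁, p₂, 0)` is the unique nonnegative zero of `g(·,0)`. -/
theorem stmt_11
    (a q₁ c₁ d c₁M dM q₂ q₃ c₂ c₃ c₂M c₃M : ℝ)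
    (ha : 0 < a) (hq₁ : 0 < q₁) (hc₁ : 0 < c₁) (hd : 0 < d)
    (hc₁M : 0 < c₁M) (hdM : 0 < dM)
    (hq₂ : 0 ≤ q₂) (hq₃ : 0 ≤ q₃) (hc₂ : 0 ≤ c₂) (hc₃ : 0 ≤ c₃)
    (hc₂M : 0 ≤ c₂M) (hc₃M : 0 ≤ c₃M)
    (g : ℝ × ℝ × ℝ → ℝ → ℝ × ℝ × ℝ)
    (hg : ∀ (x : ℝ × ℝ × ℝ) (i : ℝ), g x i =
      (a * (1 - x.1) - (q₁ + q₂ * x.2.1 + q₃ * x.2.2) * x.1,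
       c₁ / (1 + c₂ * x.2.1 + c₃ * x.2.2) * x.1 - d * x.2.1,
       c₁M / (1 + c₂M * x.2.1 + c₃M * x.2.2) * i - dM * x.2.2))
    (hq₂pos : 0 < q₂) (hc₂pos : 0 < c₂)
    (F : ℝ → ℝ)
    (hF : ∀ s, F s = 2 * d * c₂ * a /
      (2 * d * c₂ * (a + q₁) + q₂ * (Real.sqrt (d * (d + 4 * c₁ * c₂ * s)) - d))) :
    StrictAntiOn F (Icc 0 1) ∧
    (∀ s ∈ Icc (0:ℝ) 1, F s ∈ Ioc 0 (a / (a + q₁))) ∧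
    ∃ p₁ ∈ Ioo (0:ℝ) 1, F p₁ = p₁ ∧
      (∀ s ∈ Ioo (0:ℝ) 1, F s = s → s = p₁) ∧
      g (p₁, (-d + Real.sqrt (d * (d + 4 * c₁ * c₂ * p₁))) / (2 * d * c₂), 0) 0
        = 0 ∧
      ∀ y : ℝ × ℝ × ℝ, 0 ≤ y.1 → 0 ≤ y.2.1 → 0 ≤ y.2.2 → g y 0 = 0 →
        y = (p₁, (-d + Real.sqrt (d * (d + 4 * c₁ * c₂ * p₁))) / (2 * d * c₂), 0) :=
  stmt_11_general a q₁ c₁ d c₁M dM q₂ q₃ c₂ c₃ c₂M c₃M ha hq₁ hc₁ hd hdM g hg hq₂pos hc₂pos F hF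
end

section
/- Define the planar vector field G : (0,∞)² → ℝ² by G(x₁,x₂) = (a(1−x₁) − (q₁ + q₂x₂)x₁, c₁x₁/(1 + c₂x₂) − d·x₂). Then G has no nonconstant periodic orbit in (0,∞)²: there is no nonconstant differentiable γ : ℝ → (0,∞)² with γ'(t) = G(γ(t)) for all t and γ(t + T) = γ(t) for all t for some period T > 0. -/
open Set Real

/-!
The equilibrium `(p, q)` of `G` in the open quadrant carries the Lyapunov function
`V(x, y) = c₁²/2 (x - p)² + K ∫_q^y (s - q)(1 + c₂ s) ds` with `K = c₁ q₂ p + d (a + q₁)`.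
This choice of `K` cancels the cross term `-c₁² q₂ p (x - p)(y - q)` coming from the first
equation, so along the flow `V̇ ≤ -(a + q₁)/2 (c₁² (x - p)² + d² (y - q)²)`. On a periodic
orbit `V` is periodic and antitone, hence constant, so `V̇ ≡ 0` and the orbit is the equilibrium.
-/

theorem Function.Periodic.const_of_antitone {W : ℝ → ℝ} {T : ℝ} (hT : 0 < T)
    (hper : Function.Periodic W T) (hanti : Antitone W) (s t : ℝ) : W s = W t := by
  suffices h : ∀ s t, W s ≤ W t from le_antisymm (h s t) (h t s)
  intro s t
  obtain ⟨n, hn⟩ := exists_nat_gt ((t - s) / T)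
  have hle : t ≤ s + n * T := by
    rw [div_lt_iff₀ hT] at hn
    linarith
  calc W s = W (s + n * T) := (hper.nat_mul n s).symm
    _ ≤ W t := hanti hle

theorem Function.Periodic.eq_zero_of_hasDerivAt_of_nonpos {W W' : ℝ → ℝ} {T : ℝ} (hT : 0 < T)
    (hper : Function.Periodic W T) (hW : ∀ t, HasDerivAt W (W' t) t) (hW' : ∀ t, W' t ≤ 0)
    (t : ℝ) : W' t = 0 := by
  have hanti : Antitone W := antitone_of_deriv_nonpos (fun t ↦ (hW t).differentiableAt)
    (fun t ↦ (hW t).deriv ▸ hW' t)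
  have hconst : W = fun _ ↦ W 0 := funext fun s ↦ hper.const_of_antitone hT hanti s 0
  exact (hW t).unique (hconst ▸ hasDerivAt_const t (W 0))

theorem hasDerivAt_fst_comp {γ : ℝ → ℝ × ℝ} {v : ℝ × ℝ} {t : ℝ} (h : HasDerivAt γ v t) :
    HasDerivAt (fun s ↦ (γ s).1) v.1 t := by
  simpa using h.hasFDerivAt.fst.hasDerivAt

theorem hasDerivAt_snd_comp {γ : ℝ → ℝ × ℝ} {v : ℝ × ℝ} {t : ℝ} (h : HasDerivAt γ v t) :
    HasDerivAt (fun s ↦ (γ s).2) v.2 t := by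
  simpa using h.hasFDerivAt.snd.hasDerivAt

theorem exists_equilibrium {a q₁ c₁ d q₂ c₂ : ℝ}
    (ha : 0 < a) (hq₁ : 0 ≤ q₁) (hc₁ : 0 < c₁) (hd : 0 < d) (hq₂ : 0 ≤ q₂) (hc₂ : 0 ≤ c₂) :
    ∃ p q : ℝ, 0 < p ∧ 0 < q ∧ a = (a + q₁ + q₂ * q) * p ∧ c₁ * p = d * q * (1 + c₂ * q) := by
  set f : ℝ → ℝ := fun y ↦ d * y * (1 + c₂ * y) * (a + q₁ + q₂ * y)
  set Q := c₁ * a / (d * (a + q₁))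
  have hQ : 0 ≤ Q := by positivity
  have hfQ : c₁ * a ≤ f Q := by
    have hdQ : d * Q * (a + q₁) = c₁ * a := by simp only [Q]; field_simp
    have h1 : (a + q₁) * 1 ≤ (a + q₁ + q₂ * Q) * (1 + c₂ * Q) :=
      mul_le_mul (by nlinarith) (by nlinarith) zero_le_one (by positivity)
    calc c₁ * a = d * Q * ((a + q₁) * 1) := by rw [← hdQ]; ring
      _ ≤ d * Q * ((a + q₁ + q₂ * Q) * (1 + c₂ * Q)) := by gcongr
      _ = f Q := by simp only [f]; ring
  obtain ⟨q, hqQ, hfq⟩ : c₁ * a ∈ f '' Icc 0 Q :=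
    intermediate_value_Icc hQ (by fun_prop) ⟨by simp only [f]; nlinarith, hfQ⟩
  have hq : 0 < q := hqQ.1.lt_of_ne <| by
    rintro rfl
    simp only [f] at hfq
    nlinarith
  have hden : 0 < a + q₁ + q₂ * q := by positivity
  refine ⟨a / (a + q₁ + q₂ * q), q, by positivity, hq, by field_simp, ?_⟩
  field_simp
  linear_combination -hfq

section Lyapunov

variable (c₁ c₂ p q K : ℝ)

/-- `y²/2 - q y + c₂ (y³/3 - q y²/2)` is a primitive of `(y - q)(1 + c₂ y)`. -/
noncomputable def lyapunovFun (z : ℝ × ℝ) : ℝ :=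
  c₁ ^ 2 / 2 * (z.1 - p) ^ 2 +
    K * (z.2 ^ 2 / 2 - q * z.2 + c₂ * (z.2 ^ 3 / 3 - q * z.2 ^ 2 / 2))

variable {c₁ c₂ p q K}

theorem hasDerivAt_lyapunovFun_comp {γ : ℝ → ℝ × ℝ} {v : ℝ × ℝ} {t : ℝ}
    (h : HasDerivAt γ v t) :
    HasDerivAt (fun s ↦ lyapunovFun c₁ c₂ p q K (γ s))
      (c₁ ^ 2 * ((γ t).1 - p) * v.1 + K * ((γ t).2 - q) * ((1 + c₂ * (γ t).2) * v.2)) t := by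
  have hx := hasDerivAt_fst_comp h
  have hy := hasDerivAt_snd_comp h
  have hΦ := (((hy.pow 2).div_const 2).sub (hy.const_mul q)).add
    ((((hy.pow 3).div_const 3).sub (((hy.pow 2).const_mul q).div_const 2)).const_mul c₂)
  refine ((((hx.sub_const p).pow 2).const_mul (c₁ ^ 2 / 2)).add (hΦ.const_mul K)).congr_deriv ?_
  norm_num
  ring

end Lyapunov

theorem lyapunov_derivative_le {a q₁ c₁ d q₂ c₂ p q x y : ℝ}
    (ha : 0 < a) (hq₁ : 0 ≤ q₁) (hc₁ : 0 < c₁) (hd : 0 < d) (hq₂ : 0 ≤ q₂) (hc₂ : 0 ≤ c₂)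
    (hp : 0 < p) (hq : 0 < q) (hy : 0 < y)
    (hE₁ : a = (a + q₁ + q₂ * q) * p) (hE₂ : c₁ * p = d * q * (1 + c₂ * q)) :
    c₁ ^ 2 * (x - p) * (a * (1 - x) - (q₁ + q₂ * y) * x) +
        (c₁ * q₂ * p + d * (a + q₁)) * (y - q) * (c₁ * x - d * y * (1 + c₂ * y))
      ≤ -((a + q₁) / 2 * (c₁ ^ 2 * (x - p) ^ 2 + d ^ 2 * (y - q) ^ 2)) := by
  have h₁ : a * (1 - x) - (q₁ + q₂ * y) * x = -(a + q₁ + q₂ * y) * (x - p) - q₂ * p * (y - q) := by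
    linear_combination hE₁
  have h₂ : c₁ * x - d * y * (1 + c₂ * y) = c₁ * (x - p) - d * (1 + c₂ * (y + q)) * (y - q) := by
    linear_combination hE₂
  rw [h₁, h₂]
  nlinarith [mul_nonneg (by positivity : (0:ℝ) ≤ a + q₁) (sq_nonneg (c₁ * (x - p) - d * (y - q))),
    mul_nonneg (by positivity : (0:ℝ) ≤ c₁ ^ 2 * q₂ * y) (sq_nonneg (x - p)),
    mul_nonneg (by positivity : (0:ℝ) ≤ c₁ * q₂ * p * d) (sq_nonneg (y - q)),
    mul_nonneg (by positivity : (0:ℝ) ≤ (c₁ * q₂ * p + d * (a + q₁)) * d * c₂ * (y + q))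
      (sq_nonneg (y - q))]

theorem eq_zero_and_eq_zero_of_weighted_sq_nonpos {A c d X Y : ℝ} (hA : 0 < A) (hc : c ≠ 0)
    (hd : d ≠ 0) (h : A * (c ^ 2 * X ^ 2 + d ^ 2 * Y ^ 2) ≤ 0) : X = 0 ∧ Y = 0 := by
  have hS : c ^ 2 * X ^ 2 + d ^ 2 * Y ^ 2 = 0 :=
    le_antisymm (nonpos_of_mul_nonpos_right h hA) (by positivity)
  obtain ⟨hX, hY⟩ := (add_eq_zero_iff_of_nonneg (by positivity) (by positivity)).mp hS
  simpa [hc, hd] using And.intro hX hY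

/-- the planar vector field
`G(x₁,x₂) = (a(1−x₁) − (q₁+q₂x₂)x₁, c₁x₁/(1+c₂x₂) − d x₂)` has no nonconstant
periodic orbit in `(0,∞)²`. -/
theorem stmt_13
    (a q₁ c₁ d q₂ c₂ : ℝ)
    (ha : 0 < a) (hq₁ : 0 < q₁) (hc₁ : 0 < c₁) (hd : 0 < d)
    (hq₂ : 0 ≤ q₂) (hc₂ : 0 ≤ c₂)
    (G : ℝ × ℝ → ℝ × ℝ)
    (hG : ∀ x : ℝ × ℝ, G x =
      (a * (1 - x.1) - (q₁ + q₂ * x.2) * x.1,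
       c₁ * x.1 / (1 + c₂ * x.2) - d * x.2)) :
    ¬ ∃ γ : ℝ → ℝ × ℝ,
      (∀ t, γ t ∈ Ioi (0:ℝ) ×ˢ Ioi (0:ℝ)) ∧
      (∀ t, HasDerivAt γ (G (γ t)) t) ∧
      (∃ T > (0:ℝ), ∀ t, γ (t + T) = γ t) ∧
      (∃ s t, γ s ≠ γ t) := by
  rintro ⟨γ, hmem, hder, ⟨T, hT, hper⟩, s, t, hne⟩
  obtain ⟨p, q, hp, hq, hE₁, hE₂⟩ := exists_equilibrium ha hq₁.le hc₁ hd hq₂ hc₂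
  set K := c₁ * q₂ * p + d * (a + q₁)
  set D : ℝ × ℝ → ℝ := fun z ↦ c₁ ^ 2 * (z.1 - p) * (a * (1 - z.1) - (q₁ + q₂ * z.2) * z.1) +
    K * (z.2 - q) * (c₁ * z.1 - d * z.2 * (1 + c₂ * z.2))
  have hV : ∀ t, HasDerivAt (fun s ↦ lyapunovFun c₁ c₂ p q K (γ s)) (D (γ t)) t := by
    intro t
    convert hasDerivAt_lyapunovFun_comp (hder t) using 1
    have hy : 0 < (γ t).2 := (hmem t).2
    have hpos : 1 + c₂ * (γ t).2 ≠ 0 := by positivity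
    simp only [D, hG]
    field_simp
  have hD : ∀ t,
      D (γ t) ≤ -((a + q₁) / 2 * (c₁ ^ 2 * ((γ t).1 - p) ^ 2 + d ^ 2 * ((γ t).2 - q) ^ 2)) :=
    fun t ↦ lyapunov_derivative_le ha hq₁.le hc₁ hd hq₂ hc₂ hp hq (hmem t).2 hE₁ hE₂
  have hD₀ := Function.Periodic.eq_zero_of_hasDerivAt_of_nonpos hT
    (fun t ↦ by simp only [hper]) hV
    (fun t ↦ (hD t).trans (neg_nonpos.mpr (by positivity)))
  have hγ : ∀ t, γ t = (p, q) := by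
    intro t
    obtain ⟨hx, hy⟩ := eq_zero_and_eq_zero_of_weighted_sq_nonpos (by positivity) hc₁.ne' hd.ne'
      (neg_nonneg.mp (hD₀ t ▸ hD t))
    exact Prod.ext (sub_eq_zero.mp hx) (sub_eq_zero.mp hy)
  exact hne ((hγ s).trans (hγ t).symm)
end

section
/- Let p be the unique zero of the vector field g(·,0) in [0,∞)³. Then every differentiable solution x : [0,∞) → ℝ³ of x'(t) = g(x(t), 0) with x(0) ∈ B converges to p as t → ∞. -/
/-!
For `i = 0` the third equation reads `x₃' = -d_M x₃`, so `x₃ → 0`, and barrier arguments keep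
`(x₁, x₂)` in `(0, 1) × (0, 2c₁/d)`. By the fluctuation lemma, each of the numbers
`s⁺ = limsup x₁`, `s⁻ = liminf x₁`, `v⁺ = limsup x₂`, `v⁻ = liminf x₂` is attained by an
`ω`-limit point with `x₃ = 0` at which the corresponding component of `g(·, 0)` vanishes. This
yields `(a + q₁ + q₂ v⁻) s⁺ ≤ a ≤ (a + q₁ + q₂ v⁺) s⁻` and
`d v⁺ (1 + c₂ v⁺) ≤ c₁ s⁺`, `c₁ s⁻ ≤ d v⁻ (1 + c₂ v⁻)`, which force `s⁺ = s⁻` and `v⁺ = v⁻`.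
So `x` converges, and its limit is a nonnegative zero of `g(·, 0)`, that is `p`.
-/

open Set Real Filter Topology

lemma abs_le_of_hasDerivAt_of_le_add_abs {f : ℝ → ℝ} {f' τ ε : ℝ} (hf : HasDerivAt f f' τ)
    (hle : ∀ᶠ t in 𝓝 τ, f t ≤ f τ + ε * |t - τ|) : |f'| ≤ ε := by
  obtain ⟨hleft, hright⟩ := hasDerivAt_iff_tendsto_slope_left_right.1 hf
  refine abs_le.2 ⟨ge_of_tendsto hleft ?_, le_of_tendsto hright ?_⟩
  · filter_upwards [nhdsWithin_le_nhds hle, self_mem_nhdsWithin] with t ht (htτ : t < τ)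
    rw [abs_of_neg (sub_neg.2 htτ)] at ht
    rw [slope_def_field, le_div_iff_of_neg (sub_neg.2 htτ)]
    linarith
  · filter_upwards [nhdsWithin_le_nhds hle, self_mem_nhdsWithin] with t ht (htτ : τ < t)
    rw [abs_of_pos (sub_pos.2 htτ)] at ht
    rw [slope_def_field, div_le_iff₀ (sub_pos.2 htτ)]
    linarith

lemma frequently_abs_deriv_le_of_frequently_gt {f f' : ℝ → ℝ} {L ε : ℝ}
    (hf : ∀ t ≥ 0, HasDerivAt f (f' t) t) (hε : 0 < ε)
    (hub : ∀ᶠ t in atTop, f t < L + ε) (hfreq : ∃ᶠ t in atTop, L - ε < f t) :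
    ∃ᶠ t in atTop, L - ε < f t ∧ f t < L + ε ∧ |f' t| ≤ ε := by
  obtain ⟨T₁, hT₁⟩ := eventually_atTop.1 hub
  refine frequently_atTop.2 fun T => ?_
  obtain ⟨t₀, ht₀, hft₀⟩ := frequently_atTop.1 hfreq (max T (max T₁ 0) + 2)
  have hT : T ≤ t₀ - 2 := by linarith [le_max_left T (max T₁ 0)]
  have hT₁' : T₁ ≤ t₀ - 2 := by linarith [le_max_left T₁ 0, le_max_right T (max T₁ 0)]
  have h0 : 0 ≤ t₀ - 2 := by linarith [le_max_right T₁ 0, le_max_right T (max T₁ 0)]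
  -- maximise `f` minus a cone of slope `ε` centred at `t₀`
  set g : ℝ → ℝ := fun t => f t - ε * |t - t₀|
  have hg : ContinuousOn g (Icc (t₀ - 2) (t₀ + 2)) := fun t ht =>
    ((hf t (h0.trans ht.1)).continuousAt.sub (by fun_prop)).continuousWithinAt
  obtain ⟨τ, hτ, hmax⟩ := isCompact_Icc.exists_isMaxOn (nonempty_Icc.2 (by linarith)) hg
  have hgτ : f t₀ ≤ g τ := by simpa [g] using hmax (⟨by linarith, by linarith⟩ : t₀ ∈ Icc _ _)
  have hend : ∀ s, T₁ ≤ s → |s - t₀| = 2 → g s < f t₀ := fun s hs h2 => by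
    have := hT₁ s hs
    simp only [g, h2]; linarith
  have hτ' : τ ∈ Ioo (t₀ - 2) (t₀ + 2) := by
    refine ⟨lt_of_le_of_ne hτ.1 ?_, lt_of_le_of_ne hτ.2 ?_⟩ <;> rintro rfl
    · linarith [hend (t₀ - 2) hT₁' (by norm_num)]
    · linarith [hend (t₀ + 2) (by linarith) (by norm_num)]
  have hcone : ∀ᶠ t in 𝓝 τ, f t ≤ f τ + ε * |t - τ| := by
    filter_upwards [Icc_mem_nhds hτ'.1 hτ'.2] with t ht
    have := abs_sub_abs_le_abs_sub (t - t₀) (τ - t₀)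
    have hgt : g t ≤ g τ := hmax ht
    simp only [g, sub_sub_sub_cancel_right] at this hgt ⊢
    nlinarith
  refine ⟨τ, by linarith [hτ.1], ?_, hT₁ τ (by linarith [hτ.1]),
    abs_le_of_hasDerivAt_of_le_add_abs (hf τ (by linarith [hτ.1])) hcone⟩
  have : 0 ≤ ε * |τ - t₀| := by positivity
  simp only [g] at hgτ; linarith

lemma image_lt_of_deriv_neg_at_level {f f' : ℝ → ℝ} {B : ℝ}
    (hf : ∀ t ≥ 0, HasDerivAt f (f' t) t) (h₀ : f 0 < B) (hB : ∀ t ≥ 0, f t = B → f' t < 0)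
    {t : ℝ} (ht : 0 ≤ t) : f t < B := by
  have hle : ∀ s ∈ Icc 0 t, f s ≤ B := fun s hs =>
    image_le_of_deriv_right_lt_deriv_boundary (B := fun _ => B) (B' := fun _ => 0)
      (fun s hs => (hf s hs.1).continuousAt.continuousWithinAt)
      (fun s hs => (hf s hs.1).hasDerivWithinAt) h₀.le (fun _ => hasDerivAt_const _ _)
      (fun s hs => hB s hs.1) hs
  refine (hle t ⟨ht, le_rfl⟩).lt_of_ne fun heq => ?_
  rcases ht.eq_or_lt with rfl | htpos
  · exact h₀.ne heq
  -- `t` is a maximum of `f` on `[0, t]`, so the left slopes at `t` are nonnegative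
  have hslope := (hasDerivAt_iff_tendsto_slope_left_right.1 (hf t ht)).1
  have : 0 ≤ f' t := ge_of_tendsto hslope <| by
    filter_upwards [Ioo_mem_nhdsLT htpos] with s hs
    rw [slope_def_field]
    exact div_nonneg_of_nonpos (by linarith [hle s ⟨hs.1.le, hs.2.le⟩]) (by linarith [hs.2])
  linarith [hB t ht heq]

lemma lt_image_of_deriv_pos_at_level {f f' : ℝ → ℝ} {B : ℝ}
    (hf : ∀ t ≥ 0, HasDerivAt f (f' t) t) (h₀ : B < f 0) (hB : ∀ t ≥ 0, f t = B → 0 < f' t)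
    {t : ℝ} (ht : 0 ≤ t) : B < f t :=
  neg_lt_neg_iff.1 <| image_lt_of_deriv_neg_at_level (f := fun t => -f t) (B := -B)
    (fun t ht => (hf t ht).neg) (neg_lt_neg h₀)
    (fun t ht h => neg_neg_iff_pos.2 (hB t ht (neg_inj.1 h))) ht

lemma eq_mul_exp_of_hasDerivAt {f : ℝ → ℝ} {k : ℝ} (hf : ∀ t ≥ 0, HasDerivAt f (k * f t) t)
    {t : ℝ} (ht : 0 ≤ t) : f t = f 0 * exp (k * t) := by
  have hderiv : ∀ s ≥ 0, HasDerivAt (fun s => f s * exp (-k * s)) 0 s := fun s hs =>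
    ((hf s hs).mul ((hasDerivAt_id' s).const_mul (-k)).exp).congr_deriv (by ring)
  have hconst := constant_of_has_deriv_right_zero
    (fun s hs => (hderiv s hs.1).continuousAt.continuousWithinAt)
    (fun s hs => (hderiv s hs.1).hasDerivWithinAt) t ⟨ht, le_rfl⟩
  simp only [mul_zero, exp_zero, mul_one] at hconst
  rw [← hconst, mul_assoc, ← exp_add, neg_mul, neg_add_cancel, exp_zero, mul_one]

lemma mem_Icc_of_hasDerivAt_neg_mul {f : ℝ → ℝ} {k : ℝ} (hk : 0 ≤ k)
    (hf : ∀ t ≥ 0, HasDerivAt f (-k * f t) t) (h₀ : 0 ≤ f 0) {t : ℝ} (ht : 0 ≤ t) :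
    f t ∈ Icc 0 (f 0) := by
  rw [eq_mul_exp_of_hasDerivAt hf ht]
  exact ⟨by positivity, mul_le_of_le_one_right h₀ (exp_le_one_iff.2 (by nlinarith))⟩

lemma tendsto_zero_of_hasDerivAt_neg_mul {f : ℝ → ℝ} {k : ℝ} (hk : 0 < k)
    (hf : ∀ t ≥ 0, HasDerivAt f (-k * f t) t) : Tendsto f atTop (𝓝 0) := by
  have hexp : Tendsto (fun t => f 0 * exp (-k * t)) atTop (𝓝 (f 0 * 0)) :=
    (tendsto_exp_atBot.comp (tendsto_id.const_mul_atTop_of_neg (neg_neg_of_pos hk))).const_mul _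
  rw [mul_zero] at hexp
  exact hexp.congr' <| (eventually_ge_atTop 0).mono fun t ht =>
    (eq_mul_exp_of_hasDerivAt hf ht).symm

lemma IsCompact.exists_mapClusterPt_of_comp {ι E Y : Type*} [TopologicalSpace E]
    [TopologicalSpace Y] [T2Space Y] {F : Filter ι} {K : Set E} (hK : IsCompact K) {x : ι → E}
    (hxK : ∀ᶠ i in F, x i ∈ K) {h : E → Y} (hh : ContinuousOn h K) {z : Y}
    (hz : MapClusterPt z F (h ∘ x)) : ∃ y ∈ K, MapClusterPt y F x ∧ h y = z := by
  obtain ⟨U, hUF, hU⟩ := mapClusterPt_iff_ultrafilter.1 hz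
  obtain ⟨y, hyK, hy⟩ := hK.ultrafilter_le_nhds (U.map x) (tendsto_principal.2 (hUF hxK))
  have hxy : Tendsto x U (𝓝[K] y) := tendsto_nhdsWithin_iff.2 ⟨hy, hUF hxK⟩
  exact ⟨y, hyK, mapClusterPt_iff_ultrafilter.2 ⟨U, hUF, hy⟩,
    tendsto_nhds_unique ((hh y hyK).tendsto.comp hxy) hU⟩

lemma IsCompact.isBoundedUnder_comp {ι E : Type*} [TopologicalSpace E] {F : Filter ι}
    {K : Set E} (hK : IsCompact K) {x : ι → E} (hxK : ∀ᶠ i in F, x i ∈ K) {c : E → ℝ}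
    (hc : ContinuousOn c K) :
    IsBoundedUnder (· ≤ ·) F (fun i => c (x i)) ∧ IsBoundedUnder (· ≥ ·) F (fun i => c (x i)) := by
  obtain ⟨B, hB⟩ := hK.bddAbove_image hc
  obtain ⟨b, hb⟩ := hK.bddBelow_image hc
  exact ⟨isBoundedUnder_of_eventually_le (hxK.mono fun i hi => hB ⟨_, hi, rfl⟩),
    isBoundedUnder_of_eventually_ge (hxK.mono fun i hi => hb ⟨_, hi, rfl⟩)⟩

lemma MapClusterPt.mem_Icc_liminf_limsup {ι E : Type*} [TopologicalSpace E] {F : Filter ι}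
    {x : ι → E} {y : E} (hy : MapClusterPt y F x) {c : E → ℝ} (hc : Continuous c)
    (hb : IsBoundedUnder (· ≤ ·) F (fun i => c (x i)))
    (hb' : IsBoundedUnder (· ≥ ·) F (fun i => c (x i))) :
    c y ∈ Icc (Filter.liminf (fun i => c (x i)) F) (Filter.limsup (fun i => c (x i)) F) :=
  have hcy := hy.continuousAt_comp hc.continuousAt
  ⟨hcy.liminf_le hb', hcy.le_limsup hb⟩

section OmegaLimit

variable {E : Type*} [TopologicalSpace E] {x : ℝ → E} {K : Set E} {φ ψ : E → ℝ}

lemma exists_mapClusterPt_of_hasDerivAt (hK : IsCompact K) (hxK : ∀ t ≥ 0, x t ∈ K)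
    (hφ : ContinuousOn φ K) (hψ : ContinuousOn ψ K)
    (hx : ∀ t ≥ 0, HasDerivAt (fun t => φ (x t)) (ψ (x t)) t) {L : ℝ}
    (hL : ∀ ε > 0, (∀ᶠ t in atTop, φ (x t) < L + ε) ∧ ∃ᶠ t in atTop, L - ε < φ (x t)) :
    ∃ y ∈ K, MapClusterPt y atTop x ∧ φ y = L ∧ ψ y = 0 := by
  have hz : MapClusterPt (L, (0 : ℝ)) atTop ((fun y => (φ y, ψ y)) ∘ x) := by
    refine Metric.nhds_basis_ball.mapClusterPt_iff_frequently.2 fun ε hε => ?_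
    obtain ⟨hub, hfreq⟩ := hL (ε / 2) (half_pos hε)
    refine (frequently_abs_deriv_le_of_frequently_gt hx (half_pos hε) hub hfreq).mono ?_
    rintro t ⟨hlo, hhi, hd⟩
    simp only [Function.comp_apply, Metric.mem_ball, Prod.dist_eq, Real.dist_eq, sub_zero,
      max_lt_iff, abs_lt]
    exact ⟨⟨by linarith, by linarith⟩, by linarith [abs_le.1 hd], by linarith [abs_le.1 hd]⟩
  obtain ⟨y, hyK, hy, hyz⟩ :=
    hK.exists_mapClusterPt_of_comp (eventually_atTop.2 ⟨0, hxK⟩) (hφ.prodMk hψ) hz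
  exact ⟨y, hyK, hy, congrArg Prod.fst hyz, congrArg Prod.snd hyz⟩

lemma exists_mapClusterPt_limsup_of_hasDerivAt (hK : IsCompact K) (hxK : ∀ t ≥ 0, x t ∈ K)
    (hφ : ContinuousOn φ K) (hψ : ContinuousOn ψ K)
    (hx : ∀ t ≥ 0, HasDerivAt (fun t => φ (x t)) (ψ (x t)) t) :
    ∃ y ∈ K, MapClusterPt y atTop x ∧ φ y = limsup (fun t => φ (x t)) atTop ∧ ψ y = 0 := by
  obtain ⟨hb, hb'⟩ := hK.isBoundedUnder_comp (eventually_atTop.2 ⟨0, hxK⟩) hφ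
  refine exists_mapClusterPt_of_hasDerivAt hK hxK hφ hψ hx fun ε hε => ⟨?_, ?_⟩
  · exact eventually_lt_of_limsup_lt (lt_add_of_pos_right _ hε) hb
  · exact frequently_lt_of_lt_limsup hb'.isCoboundedUnder_le (sub_lt_self _ hε)

lemma exists_mapClusterPt_liminf_of_hasDerivAt (hK : IsCompact K) (hxK : ∀ t ≥ 0, x t ∈ K)
    (hφ : ContinuousOn φ K) (hψ : ContinuousOn ψ K)
    (hx : ∀ t ≥ 0, HasDerivAt (fun t => φ (x t)) (ψ (x t)) t) :
    ∃ y ∈ K, MapClusterPt y atTop x ∧ φ y = liminf (fun t => φ (x t)) atTop ∧ ψ y = 0 := by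
  obtain ⟨hb, hb'⟩ := hK.isBoundedUnder_comp (eventually_atTop.2 ⟨0, hxK⟩) hφ
  have hL : ∀ ε > 0, (∀ᶠ t in atTop, -φ (x t) < -liminf (fun t => φ (x t)) atTop + ε) ∧
      ∃ᶠ t in atTop, -liminf (fun t => φ (x t)) atTop - ε < -φ (x t) := fun ε hε =>
    ⟨(eventually_lt_of_lt_liminf (sub_lt_self _ hε) hb').mono fun t ht => by linarith,
      (frequently_lt_of_liminf_lt hb.isCoboundedUnder_ge (lt_add_of_pos_right _ hε)).mono
        fun t ht => by linarith⟩
  obtain ⟨y, hyK, hy, hφy, hψy⟩ := exists_mapClusterPt_of_hasDerivAt (φ := fun y => -φ y)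
    (ψ := fun y => -ψ y) hK hxK hφ.neg hψ.neg (fun t ht => (hx t ht).neg) hL
  exact ⟨y, hyK, hy, neg_inj.1 hφy, neg_eq_zero.1 hψy⟩

end OmegaLimit

lemma le_and_le_of_fluctuation_inequalities {a q₁ q₂ c₁ c₂ d su sl vu vl : ℝ}
    (hA : 0 < a + q₁) (hq₂ : 0 ≤ q₂) (hc₁ : 0 ≤ c₁) (hc₂ : 0 ≤ c₂) (hd : 0 < d)
    (hvl : 0 ≤ vl) (hv : vl ≤ vu)
    (h₁ : (a + q₁ + q₂ * vl) * su ≤ a) (h₂ : a ≤ (a + q₁ + q₂ * vu) * sl)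
    (h₃ : d * vu * (1 + c₂ * vu) ≤ c₁ * su) (h₄ : c₁ * sl ≤ d * vl * (1 + c₂ * vl)) :
    vu ≤ vl ∧ su ≤ sl := by
  have hvu : 0 ≤ vu := hvl.trans hv
  have hl : 0 < a + q₁ + q₂ * vl := by positivity
  -- `v ↦ d v (1 + c₂ v) / (a + q₁ + q₂ v)` is strictly increasing on `[0, ∞)`
  have hv' : vu ≤ vl := by
    by_contra! hlt
    have h₁' := mul_le_mul_of_nonneg_left h₁ hc₁
    have h₂' := mul_le_mul_of_nonneg_left h₂ hc₁
    have h₃' := mul_le_mul_of_nonneg_right h₃ hl.le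
    have h₄' := mul_le_mul_of_nonneg_right h₄ (by positivity : 0 ≤ a + q₁ + q₂ * vu)
    have : 0 < d * (vu - vl) * (a + q₁ + c₂ * (a + q₁) * (vu + vl) + c₂ * q₂ * vu * vl) :=
      mul_pos (mul_pos hd (sub_pos.2 hlt)) (by positivity)
    nlinarith
  rw [le_antisymm hv' hv] at h₂
  exact ⟨hv', le_of_mul_le_mul_left (h₁.trans h₂) hl⟩

-- The first two components of `g(·, 0)`; its third component is `-d_M x₃`.
def g₁ (a q₁ q₂ q₃ : ℝ) (y : ℝ × ℝ × ℝ) : ℝ :=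
  a * (1 - y.1) - (q₁ + q₂ * y.2.1 + q₃ * y.2.2) * y.1

noncomputable def g₂ (c₁ c₂ c₃ d : ℝ) (y : ℝ × ℝ × ℝ) : ℝ :=
  c₁ / (1 + c₂ * y.2.1 + c₃ * y.2.2) * y.1 - d * y.2.1

section Model

variable {a q₁ q₂ q₃ c₁ c₂ c₃ d : ℝ} {x : ℝ → ℝ × ℝ × ℝ}

lemma continuousOn_g₂ (hc₂ : 0 ≤ c₂) (hc₃ : 0 ≤ c₃) :
    ContinuousOn (g₂ c₁ c₂ c₃ d) {y | 0 ≤ y.2.1 ∧ 0 ≤ y.2.2} := by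
  refine ((continuousOn_const.div (by fun_prop) fun y hy => ?_).mul (by fun_prop)).sub
    (by fun_prop)
  nlinarith [mul_nonneg hc₂ hy.1, mul_nonneg hc₃ hy.2]

lemma g₂_le (hc₁ : 0 ≤ c₁) (hc₂ : 0 ≤ c₂) (hc₃ : 0 ≤ c₃) {y : ℝ × ℝ × ℝ} (hy₁ : 0 ≤ y.1)
    (hy₂ : 0 ≤ y.2.1) (hy₃ : 0 ≤ y.2.2) : g₂ c₁ c₂ c₃ d y ≤ c₁ * y.1 - d * y.2.1 := by
  have hden : 1 ≤ 1 + c₂ * y.2.1 + c₃ * y.2.2 := by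
    nlinarith [mul_nonneg hc₂ hy₂, mul_nonneg hc₃ hy₃]
  unfold g₂
  gcongr
  exact div_le_self hc₁ hden

lemma mem_box_of_hasDerivAt (ha : 0 < a) (hq₁ : 0 < q₁) (hq₂ : 0 ≤ q₂) (hq₃ : 0 ≤ q₃)
    (hc₁ : 0 < c₁) (hc₂ : 0 ≤ c₂) (hc₃ : 0 ≤ c₃) {M : ℝ} (hM : c₁ < d * M)
    (hx₁ : ∀ t ≥ 0, HasDerivAt (fun t => (x t).1) (g₁ a q₁ q₂ q₃ (x t)) t)
    (hx₂ : ∀ t ≥ 0, HasDerivAt (fun t => (x t).2.1) (g₂ c₁ c₂ c₃ d (x t)) t)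
    (hx₃ : ∀ t ≥ 0, 0 ≤ (x t).2.2) (h₀ : (x 0).1 ∈ Ioo 0 1) (h₀' : (x 0).2.1 ∈ Ioo 0 M)
    {t : ℝ} (ht : 0 ≤ t) : (x t).1 ∈ Ioo 0 1 ∧ (x t).2.1 ∈ Ioo 0 M := by
  have pos₁ : ∀ t ≥ 0, 0 < (x t).1 := fun t ht =>
    lt_image_of_deriv_pos_at_level hx₁ h₀.1 (fun s _ hs => by simp [g₁, hs, ha]) ht
  have pos₂ : ∀ t ≥ 0, 0 < (x t).2.1 := fun t ht =>
    lt_image_of_deriv_pos_at_level hx₂ h₀'.1 (fun s hs hs₂ => by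
      have := hx₃ s hs
      simp only [g₂, hs₂, mul_zero, add_zero, sub_zero]
      exact mul_pos (div_pos hc₁ (by positivity)) (pos₁ s hs)) ht
  have lt₁ : ∀ t ≥ 0, (x t).1 < 1 := fun t ht =>
    image_lt_of_deriv_neg_at_level hx₁ h₀.2 (fun s hs hs₁ => by
      have := pos₂ s hs
      have := hx₃ s hs
      simp only [g₁, hs₁, sub_self, mul_zero, mul_one, zero_sub, neg_neg_iff_pos]
      positivity) ht
  refine ⟨⟨pos₁ t ht, lt₁ t ht⟩, pos₂ t ht, ?_⟩
  refine image_lt_of_deriv_neg_at_level hx₂ h₀'.2 (fun s hs hs₂ => ?_) ht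
  have := g₂_le (d := d) hc₁.le hc₂ hc₃ (pos₁ s hs).le (pos₂ s hs).le (hx₃ s hs)
  rw [hs₂] at this
  nlinarith [lt₁ s hs]

variable {K : Set (ℝ × ℝ × ℝ)}

lemma coords_mem_Icc_of_mapClusterPt (hK : IsCompact K) (hxK : ∀ t ≥ 0, x t ∈ K)
    (hx₃ : Tendsto (fun t => (x t).2.2) atTop (𝓝 0)) {y : ℝ × ℝ × ℝ}
    (hy : MapClusterPt y atTop x) :
    y.1 ∈ Icc (liminf (fun t => (x t).1) atTop) (limsup (fun t => (x t).1) atTop) ∧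
      y.2.1 ∈ Icc (liminf (fun t => (x t).2.1) atTop) (limsup (fun t => (x t).2.1) atTop) ∧
      y.2.2 = 0 := by
  have hc : ∀ c : ℝ × ℝ × ℝ → ℝ, Continuous c →
      c y ∈ Icc (liminf (fun t => c (x t)) atTop) (limsup (fun t => c (x t)) atTop) :=
    fun c hc => have hb := hK.isBoundedUnder_comp (eventually_atTop.2 ⟨0, hxK⟩) hc.continuousOn
      hy.mem_Icc_liminf_limsup hc hb.1 hb.2
  have h₃ := hc (fun y : ℝ × ℝ × ℝ => y.2.2) (by fun_prop)
  rw [hx₃.liminf_eq, hx₃.limsup_eq] at h₃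
  exact ⟨hc _ continuous_fst, hc (fun y : ℝ × ℝ × ℝ => y.2.1) (by fun_prop), le_antisymm h₃.2 h₃.1⟩

lemma fluctuation_inequalities (hq₂ : 0 ≤ q₂) (hc₁ : 0 ≤ c₁) (hc₂ : 0 ≤ c₂) (hc₃ : 0 ≤ c₃)
    (hK : IsCompact K) (hKnn : K ⊆ {y | 0 ≤ y.1 ∧ 0 ≤ y.2.1 ∧ 0 ≤ y.2.2})
    (hxK : ∀ t ≥ 0, x t ∈ K)
    (hx₁ : ∀ t ≥ 0, HasDerivAt (fun t => (x t).1) (g₁ a q₁ q₂ q₃ (x t)) t)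
    (hx₂ : ∀ t ≥ 0, HasDerivAt (fun t => (x t).2.1) (g₂ c₁ c₂ c₃ d (x t)) t)
    (hx₃ : Tendsto (fun t => (x t).2.2) atTop (𝓝 0)) {su sl vu vl : ℝ}
    (hsu : limsup (fun t => (x t).1) atTop = su) (hsl : liminf (fun t => (x t).1) atTop = sl)
    (hvu : limsup (fun t => (x t).2.1) atTop = vu)
    (hvl : liminf (fun t => (x t).2.1) atTop = vl) :
    0 ≤ sl ∧ 0 ≤ vl ∧ (a + q₁ + q₂ * vl) * su ≤ a ∧ a ≤ (a + q₁ + q₂ * vu) * sl ∧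
      d * vu * (1 + c₂ * vu) ≤ c₁ * su ∧ c₁ * sl ≤ d * vl * (1 + c₂ * vl) := by
  have hω := fun y => coords_mem_Icc_of_mapClusterPt (y := y) hK hxK hx₃
  rw [hsu, hsl, hvu, hvl] at hω
  have hg₁ : ContinuousOn (g₁ a q₁ q₂ q₃) K := by unfold g₁; fun_prop
  have hg₂ : ContinuousOn (g₂ c₁ c₂ c₃ d) K :=
    (continuousOn_g₂ hc₂ hc₃).mono fun y hy => (hKnn hy).2
  obtain ⟨⟨s₁, v₁, w₁⟩, hy₁K, hy₁, (_ : s₁ = su), hy₁g⟩ :=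
    hsu ▸ exists_mapClusterPt_limsup_of_hasDerivAt hK hxK continuousOn_fst hg₁ hx₁
  obtain ⟨⟨s₂, v₂, w₂⟩, hy₂K, hy₂, (_ : s₂ = sl), hy₂g⟩ :=
    hsl ▸ exists_mapClusterPt_liminf_of_hasDerivAt hK hxK continuousOn_fst hg₁ hx₁
  obtain ⟨⟨s₃, v₃, w₃⟩, hy₃K, hy₃, (_ : v₃ = vu), hy₃g⟩ :=
    hvu ▸ exists_mapClusterPt_limsup_of_hasDerivAt (φ := fun y : ℝ × ℝ × ℝ => y.2.1) hK hxK
      (by fun_prop) hg₂ hx₂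
  obtain ⟨⟨s₄, v₄, w₄⟩, hy₄K, hy₄, (_ : v₄ = vl), hy₄g⟩ :=
    hvl ▸ exists_mapClusterPt_liminf_of_hasDerivAt (φ := fun y : ℝ × ℝ × ℝ => y.2.1) hK hxK
      (by fun_prop) hg₂ hx₂
  subst s₁ s₂ v₃ v₄
  obtain ⟨⟨-, -⟩, ⟨hv₁, -⟩, rfl⟩ := hω _ hy₁
  obtain ⟨⟨-, -⟩, ⟨-, hv₂⟩, rfl⟩ := hω _ hy₂
  obtain ⟨⟨-, hs₃⟩, ⟨hv₃, -⟩, rfl⟩ := hω _ hy₃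
  obtain ⟨⟨hs₄, -⟩, -, rfl⟩ := hω _ hy₄
  have hs₁₀ : 0 ≤ su := (hKnn hy₁K).1
  have hs₂₀ : 0 ≤ sl := (hKnn hy₂K).1
  have hv₄₀ : 0 ≤ vl := (hKnn hy₄K).2.1
  have hden : ∀ v : ℝ, 0 ≤ v → 0 < 1 + c₂ * v + c₃ * 0 := fun v hv => by positivity
  simp only [g₁, g₂, sub_eq_zero, div_mul_eq_mul_div] at hy₁g hy₂g hy₃g hy₄g
  rw [div_eq_iff (hden _ (hv₄₀.trans hv₃)).ne'] at hy₃g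
  rw [div_eq_iff (hden _ hv₄₀).ne'] at hy₄g
  refine ⟨hs₂₀, hv₄₀, ?_, ?_, ?_, ?_⟩
  · nlinarith [mul_le_mul_of_nonneg_left hv₁ (mul_nonneg hq₂ hs₁₀)]
  · nlinarith [mul_le_mul_of_nonneg_left hv₂ (mul_nonneg hq₂ hs₂₀)]
  · nlinarith [mul_le_mul_of_nonneg_left hs₃ hc₁]
  · nlinarith [mul_le_mul_of_nonneg_left hs₄ hc₁]

lemma exists_zero_tendsto_of_forall_mem (hA : 0 < a + q₁) (hq₂ : 0 ≤ q₂) (hc₁ : 0 ≤ c₁)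
    (hc₂ : 0 ≤ c₂) (hc₃ : 0 ≤ c₃) (hd : 0 < d)
    (hK : IsCompact K) (hKnn : K ⊆ {y | 0 ≤ y.1 ∧ 0 ≤ y.2.1 ∧ 0 ≤ y.2.2})
    (hxK : ∀ t ≥ 0, x t ∈ K)
    (hx₁ : ∀ t ≥ 0, HasDerivAt (fun t => (x t).1) (g₁ a q₁ q₂ q₃ (x t)) t)
    (hx₂ : ∀ t ≥ 0, HasDerivAt (fun t => (x t).2.1) (g₂ c₁ c₂ c₃ d (x t)) t)
    (hx₃ : Tendsto (fun t => (x t).2.2) atTop (𝓝 0)) :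
    ∃ s v : ℝ, 0 ≤ s ∧ 0 ≤ v ∧ g₁ a q₁ q₂ q₃ (s, v, 0) = 0 ∧ g₂ c₁ c₂ c₃ d (s, v, 0) = 0 ∧
      Tendsto x atTop (𝓝 (s, v, 0)) := by
  have hev : ∀ᶠ t in atTop, x t ∈ K := eventually_atTop.2 ⟨0, hxK⟩
  obtain ⟨hb₁, hb₁'⟩ := hK.isBoundedUnder_comp hev continuousOn_fst
  obtain ⟨hb₂, hb₂'⟩ := hK.isBoundedUnder_comp hev (c := fun y => y.2.1) (by fun_prop)
  obtain ⟨hs₀, hv₀, h₁, h₂, h₃, h₄⟩ :=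
    fluctuation_inequalities hq₂ hc₁ hc₂ hc₃ hK hKnn hxK hx₁ hx₂ hx₃ rfl rfl rfl rfl
  obtain ⟨hv, hs⟩ := le_and_le_of_fluctuation_inequalities hA hq₂ hc₁ hc₂ hd hv₀
    (liminf_le_limsup hb₂ hb₂') h₁ h₂ h₃ h₄
  have hs' := le_antisymm hs (liminf_le_limsup hb₁ hb₁')
  have hv' := le_antisymm hv (liminf_le_limsup hb₂ hb₂')
  simp only [hs', hv'] at h₁ h₂ h₃
  refine ⟨_, _, hs₀, hv₀, ?_, ?_, (tendsto_of_liminf_eq_limsup rfl hs' hb₁ hb₁').prodMk_nhds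
    ((tendsto_of_liminf_eq_limsup rfl hv' hb₂ hb₂').prodMk_nhds hx₃)⟩
  · simp only [g₁]
    linarith
  · have hden : 0 < 1 + c₂ * liminf (fun t => (x t).2.1) atTop + c₃ * 0 := by positivity
    simp only [g₂, sub_eq_zero, div_mul_eq_mul_div, div_eq_iff hden.ne']
    linarith

end Model

theorem stmt_14_general
    (a q₁ c₁ d c₁M dM q₂ q₃ c₂ c₃ c₂M c₃M : ℝ)
    (ha : 0 < a) (hq₁ : 0 < q₁) (hc₁ : 0 < c₁) (hd : 0 < d)
    (hc₁M : 0 < c₁M) (hdM : 0 < dM)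
    (hq₂ : 0 ≤ q₂) (hq₃ : 0 ≤ q₃) (hc₂ : 0 ≤ c₂) (hc₃ : 0 ≤ c₃)
    (g : ℝ × ℝ × ℝ → ℝ → ℝ × ℝ × ℝ)
    (hg : ∀ (x : ℝ × ℝ × ℝ) (i : ℝ), g x i =
      (a * (1 - x.1) - (q₁ + q₂ * x.2.1 + q₃ * x.2.2) * x.1,
       c₁ / (1 + c₂ * x.2.1 + c₃ * x.2.2) * x.1 - d * x.2.1,
       c₁M / (1 + c₂M * x.2.1 + c₃M * x.2.2) * i - dM * x.2.2))
    (b₁ B₁ b₂ : ℝ)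
    (hb₁ : b₁ = a / (a + q₁ + q₂ * (c₁ / d) + q₃ * (c₁M / dM)))
    (hB₁ : B₁ = a / (a + q₁))
    (hb₂ : b₂ = c₁ * b₁ / (d * (1 + c₂ * (c₁ / d) + c₃ * (c₁M / dM))))
    -- `p` is the unique zero of `g(·,0)` in `[0,∞)³`
    (p : ℝ × ℝ × ℝ)
    (hpuniq : ∀ y : ℝ × ℝ × ℝ, 0 ≤ y.1 → 0 ≤ y.2.1 → 0 ≤ y.2.2 →
      g y 0 = 0 → y = p)
    -- a solution of `x' = g(x,0)` on `[0,∞)` starting in `B`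
    (x : ℝ → ℝ × ℝ × ℝ)
    (hx : ∀ t ≥ (0:ℝ), HasDerivAt x (g (x t) 0) t)
    (hx0 : x 0 ∈ Icc b₁ B₁ ×ˢ Icc b₂ (c₁ / d) ×ˢ Icc 0 (c₁M / dM)) :
    Tendsto x atTop (nhds p) := by
  have hg₀ : ∀ y, g y 0 = (g₁ a q₁ q₂ q₃ y, g₂ c₁ c₂ c₃ d y, -dM * y.2.2) := fun y => by
    simp [hg, g₁, g₂]
  have hx' : ∀ t ≥ 0,
      HasDerivAt x (g₁ a q₁ q₂ q₃ (x t), g₂ c₁ c₂ c₃ d (x t), -dM * (x t).2.2) t :=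
    fun t ht => hg₀ (x t) ▸ hx t ht
  have hx₁ : ∀ t ≥ 0, HasDerivAt (fun t => (x t).1) (g₁ a q₁ q₂ q₃ (x t)) t :=
    fun t ht => (hx' t ht).fst
  have hx₂ : ∀ t ≥ 0, HasDerivAt (fun t => (x t).2.1) (g₂ c₁ c₂ c₃ d (x t)) t :=
    fun t ht => (hx' t ht).snd.fst
  have hx₃ : ∀ t ≥ 0, HasDerivAt (fun t => (x t).2.2) (-dM * (x t).2.2) t :=
    fun t ht => (hx' t ht).snd.snd
  obtain ⟨⟨hb₁x, hB₁x⟩, ⟨hb₂x, hc₁dx⟩, hx₃0, -⟩ := hx0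
  have hb₁pos : 0 < b₁ := by rw [hb₁]; positivity
  have hb₂pos : 0 < b₂ := by rw [hb₂]; positivity
  have hB₁lt : B₁ < 1 := by rw [hB₁, div_lt_one (by positivity)]; linarith
  have hx₃mem := fun t (ht : 0 ≤ t) => mem_Icc_of_hasDerivAt_neg_mul hdM.le hx₃ hx₃0 ht
  have hxK : ∀ t ≥ 0, x t ∈ Icc 0 1 ×ˢ Icc 0 (2 * c₁ / d) ×ˢ Icc 0 (x 0).2.2 := fun t ht => by
    have hM : c₁ / d < 2 * c₁ / d := div_lt_div_of_pos_right (by linarith) hd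
    obtain ⟨h₁, h₂⟩ := mem_box_of_hasDerivAt (M := 2 * c₁ / d) ha hq₁ hq₂ hq₃ hc₁ hc₂ hc₃
      (by field_simp; linarith) hx₁ hx₂ (fun t ht => (hx₃mem t ht).1)
      ⟨by linarith, by linarith⟩ ⟨by linarith, by linarith⟩ ht
    exact ⟨Ioo_subset_Icc_self h₁, Ioo_subset_Icc_self h₂, hx₃mem t ht⟩
  obtain ⟨s, v, hs, hv, h₁, h₂, hlim⟩ := exists_zero_tendsto_of_forall_mem (by linarith) hq₂
    hc₁.le hc₂ hc₃ hd (isCompact_Icc.prod (isCompact_Icc.prod isCompact_Icc))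
    (fun y hy => ⟨hy.1.1, hy.2.1.1, hy.2.2.1⟩) hxK hx₁ hx₂
    (tendsto_zero_of_hasDerivAt_neg_mul hdM hx₃)
  rwa [← hpuniq (s, v, 0) hs hv le_rfl (by simp [hg₀, h₁, h₂])]

/-- every solution of `x' = g(x,0)` starting in the compact set
`B` converges, as `t → ∞`, to the unique nonnegative zero `p` of `g(·,0)`. -/
theorem stmt_14
    (a q₁ c₁ d c₁M dM q₂ q₃ c₂ c₃ c₂M c₃M : ℝ)
    (ha : 0 < a) (hq₁ : 0 < q₁) (hc₁ : 0 < c₁) (hd : 0 < d)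
    (hc₁M : 0 < c₁M) (hdM : 0 < dM)
    (hq₂ : 0 ≤ q₂) (hq₃ : 0 ≤ q₃) (hc₂ : 0 ≤ c₂) (hc₃ : 0 ≤ c₃)
    (hc₂M : 0 ≤ c₂M) (hc₃M : 0 ≤ c₃M)
    (g : ℝ × ℝ × ℝ → ℝ → ℝ × ℝ × ℝ)
    (hg : ∀ (x : ℝ × ℝ × ℝ) (i : ℝ), g x i =
      (a * (1 - x.1) - (q₁ + q₂ * x.2.1 + q₃ * x.2.2) * x.1,
       c₁ / (1 + c₂ * x.2.1 + c₃ * x.2.2) * x.1 - d * x.2.1,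
       c₁M / (1 + c₂M * x.2.1 + c₃M * x.2.2) * i - dM * x.2.2))
    (b₁ B₁ b₂ : ℝ)
    (hb₁ : b₁ = a / (a + q₁ + q₂ * (c₁ / d) + q₃ * (c₁M / dM)))
    (hB₁ : B₁ = a / (a + q₁))
    (hb₂ : b₂ = c₁ * b₁ / (d * (1 + c₂ * (c₁ / d) + c₃ * (c₁M / dM))))
    -- `p` is the unique zero of `g(·,0)` in `[0,∞)³`
    (p : ℝ × ℝ × ℝ) (hp₀ : 0 ≤ p.1 ∧ 0 ≤ p.2.1 ∧ 0 ≤ p.2.2)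
    (hpzero : g p 0 = 0)
    (hpuniq : ∀ y : ℝ × ℝ × ℝ, 0 ≤ y.1 → 0 ≤ y.2.1 → 0 ≤ y.2.2 →
      g y 0 = 0 → y = p)
    -- a solution of `x' = g(x,0)` on `[0,∞)` starting in `B`
    (x : ℝ → ℝ × ℝ × ℝ)
    (hx : ∀ t ≥ (0:ℝ), HasDerivAt x (g (x t) 0) t)
    (hx0 : x 0 ∈ Icc b₁ B₁ ×ˢ Icc b₂ (c₁ / d) ×ˢ Icc 0 (c₁M / dM)) :
    Tendsto x atTop (nhds p) :=
  stmt_14_general a q₁ c₁ d c₁M dM q₂ q₃ c₂ c₃ c₂M c₃M ha hq₁ hc₁ hd hc₁M hdM hq₂ hq₃ hc₂ hc₃ g hg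
    b₁ B₁ b₂ hb₁ hB₁ hb₂ p hpuniq x hx hx0
end

section
/- For x = (x₁,x₂,x₃) ∈ [0,∞)³ set T(x) = 1 + c₂x₂ + c₃x₃ and T_M(x) = 1 + c_{2,M}x₂ + c_{3,M}x₃. For the Lie bracket convention [V,W](x) = DW(x)·V(x) − DV(x)·W(x), the bracket of the vector fields g(·,0) and g(·,1) satisfies, at every x ∈ [0,∞)³: [g(·,0), g(·,1)](x) = ( q₃x₁c_{1,M}/T_M(x), c₃c₁x₁c_{1,M}/(T(x)²·T_M(x)), W₃(x) ), where W₃(x) = d_M·c_{1,M}/T_M(x) − (c_{1,M}c_{2,M}/T_M(x)²)·(c₁x₁/T(x) − d·x₂) + c_{1,M}c_{3,M}·d_M·x₃/T_M(x)². -/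
/-!
Since `g(·,1) = g(·,0) + G` with `G = (0, 0, r_M)`, bilinearity of the bracket and `[V, V] = 0`
give `[g(·,0), g(·,1)] = [g(·,0), G] = DG · g(·,0) - Dg(·,0) · G`. Only the third column of
`Dg(·,0)` meets `G`, and only the third row of `DG` is nonzero, so both terms are short
rational expressions.
-/

open Set Real

namespace ControlAffineSystem

open VectorField ContinuousLinearMap

noncomputable def driftField (a q₁ q₂ q₃ c₁ c₂ c₃ d dM : ℝ) (y : ℝ × ℝ × ℝ) : ℝ × ℝ × ℝ :=
  (a * (1 - y.1) - (q₁ + q₂ * y.2.1 + q₃ * y.2.2) * y.1,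
   c₁ / (1 + c₂ * y.2.1 + c₃ * y.2.2) * y.1 - d * y.2.1,
   -dM * y.2.2)

noncomputable def controlField (c₁M c₂M c₃M : ℝ) (y : ℝ × ℝ × ℝ) : ℝ × ℝ × ℝ :=
  (0, 0, c₁M / (1 + c₂M * y.2.1 + c₃M * y.2.2))

variable {a q₁ q₂ q₃ c₁ c₂ c₃ d dM c₁M c₂M c₃M : ℝ} {x : ℝ × ℝ × ℝ}

lemma hasFDerivAt_const_div_denom (c : ℝ) {b₂ b₃ : ℝ} (hT : 1 + b₂ * x.2.1 + b₃ * x.2.2 ≠ 0) :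
    HasFDerivAt (fun y : ℝ × ℝ × ℝ => c / (1 + b₂ * y.2.1 + b₃ * y.2.2))
      ((-c / (1 + b₂ * x.2.1 + b₃ * x.2.2) ^ 2) •
        (b₂ • (fst ℝ ℝ ℝ ∘L snd ℝ ℝ (ℝ × ℝ)) + b₃ • (snd ℝ ℝ ℝ ∘L snd ℝ ℝ (ℝ × ℝ)))) x := by
  have h := ((hasFDerivAt_inv hT).comp x
    (((hasFDerivAt_const (1 : ℝ) x).add ((hasFDerivAt_fst.comp x hasFDerivAt_snd).const_mul b₂)).add
      ((hasFDerivAt_snd.comp x hasFDerivAt_snd).const_mul b₃))).const_mul c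
  simp only [div_eq_mul_inv]
  refine h.congr_fderiv ?_
  ext <;> simp <;> ring

lemma differentiableAt_driftField (hT : 1 + c₂ * x.2.1 + c₃ * x.2.2 ≠ 0) :
    DifferentiableAt ℝ (driftField a q₁ q₂ q₃ c₁ c₂ c₃ d dM) x := by
  unfold driftField
  fun_prop (disch := exact hT)

lemma differentiableAt_controlField (hT : 1 + c₂M * x.2.1 + c₃M * x.2.2 ≠ 0) :
    DifferentiableAt ℝ (controlField c₁M c₂M c₃M) x := by
  unfold controlField
  fun_prop (disch := exact hT)

lemma fderiv_driftField_apply (hT : 1 + c₂ * x.2.1 + c₃ * x.2.2 ≠ 0) (v : ℝ × ℝ × ℝ) :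
    fderiv ℝ (driftField a q₁ q₂ q₃ c₁ c₂ c₃ d dM) x v =
      (-(a + q₁ + q₂ * x.2.1 + q₃ * x.2.2) * v.1 - (q₂ * v.2.1 + q₃ * v.2.2) * x.1,
       c₁ / (1 + c₂ * x.2.1 + c₃ * x.2.2) * v.1
         - c₁ * (c₂ * v.2.1 + c₃ * v.2.2) / (1 + c₂ * x.2.1 + c₃ * x.2.2) ^ 2 * x.1
         - d * v.2.1,
       -dM * v.2.2) := by
  have hp₁ : HasFDerivAt (fun y : ℝ × ℝ × ℝ => y.1) (fst ℝ ℝ (ℝ × ℝ)) x := hasFDerivAt_fst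
  have hp₂ : HasFDerivAt (fun y : ℝ × ℝ × ℝ => y.2.1) (fst ℝ ℝ ℝ ∘L snd ℝ ℝ (ℝ × ℝ)) x :=
    hasFDerivAt_fst.comp x hasFDerivAt_snd
  have hp₃ : HasFDerivAt (fun y : ℝ × ℝ × ℝ => y.2.2) (snd ℝ ℝ ℝ ∘L snd ℝ ℝ (ℝ × ℝ)) x :=
    hasFDerivAt_snd.comp x hasFDerivAt_snd
  have h₁ := (((hasFDerivAt_const 1 x).sub hp₁).const_mul a).sub
    ((((hasFDerivAt_const q₁ x).add (hp₂.const_mul q₂)).add (hp₃.const_mul q₃)).mul hp₁)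
  have h₂ := ((hasFDerivAt_const_div_denom c₁ hT).mul hp₁).sub (hp₂.const_mul d)
  have h₃ := hp₃.const_mul (-dM)
  have h : HasFDerivAt (driftField a q₁ q₂ q₃ c₁ c₂ c₃ d dM) _ x := h₁.prodMk (h₂.prodMk h₃)
  rw [h.fderiv]
  ext <;> simp <;> ring

lemma fderiv_controlField_apply (hT : 1 + c₂M * x.2.1 + c₃M * x.2.2 ≠ 0)
    (v : ℝ × ℝ × ℝ) :
    fderiv ℝ (controlField c₁M c₂M c₃M) x v =
      (0, 0, -(c₁M * (c₂M * v.2.1 + c₃M * v.2.2) / (1 + c₂M * x.2.1 + c₃M * x.2.2) ^ 2)) := by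
  have h := (hasFDerivAt_const (0 : ℝ) x).prodMk
    ((hasFDerivAt_const (0 : ℝ) x).prodMk (hasFDerivAt_const_div_denom c₁M hT))
  have h' : HasFDerivAt (controlField c₁M c₂M c₃M) _ x := h
  rw [h'.fderiv]
  ext <;> simp
  ring

lemma lieBracket_driftField_controlField (hT : 1 + c₂ * x.2.1 + c₃ * x.2.2 ≠ 0) (hTM : 1 + c₂M * x.2.1 + c₃M * x.2.2 ≠ 0) :
    lieBracket ℝ (driftField a q₁ q₂ q₃ c₁ c₂ c₃ d dM) (controlField c₁M c₂M c₃M) x =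
      (q₃ * x.1 * c₁M / (1 + c₂M * x.2.1 + c₃M * x.2.2),
       c₃ * c₁ * x.1 * c₁M /
         ((1 + c₂ * x.2.1 + c₃ * x.2.2) ^ 2 * (1 + c₂M * x.2.1 + c₃M * x.2.2)),
       dM * c₁M / (1 + c₂M * x.2.1 + c₃M * x.2.2)
         - c₁M * c₂M / (1 + c₂M * x.2.1 + c₃M * x.2.2) ^ 2 *
             (c₁ * x.1 / (1 + c₂ * x.2.1 + c₃ * x.2.2) - d * x.2.1)
         + c₁M * c₃M * dM * x.2.2 / (1 + c₂M * x.2.1 + c₃M * x.2.2) ^ 2) := by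
  rw [lieBracket, fderiv_controlField_apply hTM, fderiv_driftField_apply hT]
  simp only [driftField, controlField, Prod.mk_sub_mk, Prod.mk.injEq]
  refine ⟨?_, ?_, ?_⟩ <;> field_simp <;> ring

end ControlAffineSystem

open ControlAffineSystem VectorField

theorem stmt_15_general
    (a q₁ c₁ d c₁M dM q₂ q₃ c₂ c₃ c₂M c₃M : ℝ)
    (hc₂ : 0 ≤ c₂) (hc₃ : 0 ≤ c₃)
    (hc₂M : 0 ≤ c₂M) (hc₃M : 0 ≤ c₃M)
    (g : ℝ × ℝ × ℝ → ℝ → ℝ × ℝ × ℝ)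
    (hg : ∀ (x : ℝ × ℝ × ℝ) (i : ℝ), g x i =
      (a * (1 - x.1) - (q₁ + q₂ * x.2.1 + q₃ * x.2.2) * x.1,
       c₁ / (1 + c₂ * x.2.1 + c₃ * x.2.2) * x.1 - d * x.2.1,
       c₁M / (1 + c₂M * x.2.1 + c₃M * x.2.2) * i - dM * x.2.2)) :
    ∀ x : ℝ × ℝ × ℝ, 0 ≤ x.1 → 0 ≤ x.2.1 → 0 ≤ x.2.2 →
      fderiv ℝ (fun y => g y 1) x (g x 0) - fderiv ℝ (fun y => g y 0) x (g x 1)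
        =
      (q₃ * x.1 * c₁M / (1 + c₂M * x.2.1 + c₃M * x.2.2),
       c₃ * c₁ * x.1 * c₁M /
         ((1 + c₂ * x.2.1 + c₃ * x.2.2) ^ 2 * (1 + c₂M * x.2.1 + c₃M * x.2.2)),
       dM * c₁M / (1 + c₂M * x.2.1 + c₃M * x.2.2)
         - c₁M * c₂M / (1 + c₂M * x.2.1 + c₃M * x.2.2) ^ 2 *
             (c₁ * x.1 / (1 + c₂ * x.2.1 + c₃ * x.2.2) - d * x.2.1)
         + c₁M * c₃M * dM * x.2.2 / (1 + c₂M * x.2.1 + c₃M * x.2.2) ^ 2) := by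
  intro x _ hx₂ hx₃
  have hT : 1 + c₂ * x.2.1 + c₃ * x.2.2 ≠ 0 := by positivity
  have hTM : 1 + c₂M * x.2.1 + c₃M * x.2.2 ≠ 0 := by positivity
  have hg₀ : (fun y => g y 0) = driftField a q₁ q₂ q₃ c₁ c₂ c₃ d dM := by
    ext y <;> simp [hg, driftField]
  have hg₁ : (fun y => g y 1) = driftField a q₁ q₂ q₃ c₁ c₂ c₃ d dM + controlField c₁M c₂M c₃M := by
    ext y <;> simp [hg, driftField, controlField]
    ring
  change lieBracket ℝ (fun y => g y 0) (fun y => g y 1) x = _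
  rw [hg₀, hg₁, lieBracket_add_right (differentiableAt_driftField hT)
    (differentiableAt_controlField hTM), lieBracket_self, Pi.zero_apply, zero_add,
    lieBracket_driftField_controlField hT hTM]

/-- explicit computation of the Lie bracket
`[g(·,0), g(·,1)](x) = Dg(·,1)(x)·g(x,0) − Dg(·,0)(x)·g(x,1)` at every point of
`[0,∞)³`. -/
theorem stmt_15
    (a q₁ c₁ d c₁M dM q₂ q₃ c₂ c₃ c₂M c₃M : ℝ)
    (ha : 0 < a) (hq₁ : 0 < q₁) (hc₁ : 0 < c₁) (hd : 0 < d)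
    (hc₁M : 0 < c₁M) (hdM : 0 < dM)
    (hq₂ : 0 ≤ q₂) (hq₃ : 0 ≤ q₃) (hc₂ : 0 ≤ c₂) (hc₃ : 0 ≤ c₃)
    (hc₂M : 0 ≤ c₂M) (hc₃M : 0 ≤ c₃M)
    (g : ℝ × ℝ × ℝ → ℝ → ℝ × ℝ × ℝ)
    (hg : ∀ (x : ℝ × ℝ × ℝ) (i : ℝ), g x i =
      (a * (1 - x.1) - (q₁ + q₂ * x.2.1 + q₃ * x.2.2) * x.1,
       c₁ / (1 + c₂ * x.2.1 + c₃ * x.2.2) * x.1 - d * x.2.1,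
       c₁M / (1 + c₂M * x.2.1 + c₃M * x.2.2) * i - dM * x.2.2)) :
    ∀ x : ℝ × ℝ × ℝ, 0 ≤ x.1 → 0 ≤ x.2.1 → 0 ≤ x.2.2 →
      fderiv ℝ (fun y => g y 1) x (g x 0) - fderiv ℝ (fun y => g y 0) x (g x 1)
        =
      (q₃ * x.1 * c₁M / (1 + c₂M * x.2.1 + c₃M * x.2.2),
       c₃ * c₁ * x.1 * c₁M /
         ((1 + c₂ * x.2.1 + c₃ * x.2.2) ^ 2 * (1 + c₂M * x.2.1 + c₃M * x.2.2)),
       dM * c₁M / (1 + c₂M * x.2.1 + c₃M * x.2.2)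
         - c₁M * c₂M / (1 + c₂M * x.2.1 + c₃M * x.2.2) ^ 2 *
             (c₁ * x.1 / (1 + c₂ * x.2.1 + c₃ * x.2.2) - d * x.2.1)
         + c₁M * c₃M * dM * x.2.2 / (1 + c₂M * x.2.1 + c₃M * x.2.2) ^ 2) :=
  stmt_15_general a q₁ c₁ d c₁M dM q₂ q₃ c₂ c₃ c₂M c₃M hc₂ hc₃ hc₂M hc₃M g hg
end

section
/- Assume q₂ + q₃ > 0 and c₃ + q₃ > 0. Then there exists a point x ∈ B at which the three vectors g(x,0), g(x,1), and [g(·,0), g(·,1)](x) form a basis of ℝ³ (i.e. they are linearly independent), where [V,W](x) = DW(x)·V(x) − DV(x)·W(x) denotes the Lie bracket. -/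
open Set VectorField

/-!
At `x = (p, c₁/d, 0)` the fields `g(·,0)` and `g(·,1)` share their first two components
`V₁, V₂` and differ by `r_M` in the third. Hence `g(x,0) = (u, 0)`, `g(x,1) = (u, r_M(x))`, and the
first two components of the bracket are `-r_M(x) ∂₃V₁, -r_M(x) ∂₃V₂`, i.e. `r_M(x) p (q₃, c₁c₃/E²)`
with `E = 1 + c₂c₁/d`. The three vectors are independent as soon as the `2 × 2` determinant of `u`
and these two components is nonzero. Divided by `r_M(x) p`, that determinant is an affine function of
`p` whose value at `p = 0` is `c₃ (a c₁/E²) + q₃ c₁ > 0`, so it vanishes at most once, whereas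
`[b₁, B₁]` is a nondegenerate interval because `q₂ + q₃ > 0`.
-/

theorem VectorField.map_lieBracket_of_comp_eq {𝕜 E G : Type*} [NontriviallyNormedField 𝕜]
    [NormedAddCommGroup E] [NormedSpace 𝕜 E] [NormedAddCommGroup G] [NormedSpace 𝕜 G]
    {V W : E → E} {ψ : E → G} {x : E} (L : E →L[𝕜] G) (hV : L ∘ V = ψ) (hW : L ∘ W = ψ)
    (hVx : DifferentiableAt 𝕜 V x) (hWx : DifferentiableAt 𝕜 W x) :
    L (lieBracket 𝕜 V W x) = fderiv 𝕜 ψ x (V x - W x) := by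
  have hcomp : ∀ U : E → E, DifferentiableAt 𝕜 U x → L ∘ U = ψ →
      ∀ v, L (fderiv 𝕜 U x v) = fderiv 𝕜 ψ x v := by
    rintro U hU rfl v
    rw [(L.hasFDerivAt.comp x hU.hasFDerivAt).fderiv]
    rfl
  rw [lieBracket, map_sub, hcomp W hWx hW, hcomp V hVx hV, map_sub]

theorem fderiv_apply_zero_zero {F : Type*} [NormedAddCommGroup F] [NormedSpace ℝ F]
    {f : ℝ × ℝ × ℝ → F} {x : ℝ × ℝ × ℝ} {f' : F} (hf : DifferentiableAt ℝ f x)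
    (hf' : HasDerivAt (fun t => f (x.1, x.2.1, t)) f' x.2.2) (s : ℝ) :
    fderiv ℝ f x (0, 0, s) = s • f' := by
  have hcurve : HasDerivAt (fun t : ℝ => (x.1, x.2.1, t)) ((0 : ℝ), (0 : ℝ), (1 : ℝ)) x.2.2 :=
    (hasDerivAt_const _ _).prodMk ((hasDerivAt_const _ _).prodMk (hasDerivAt_id _))
  rw [hf'.unique (hf.hasFDerivAt.comp_hasDerivAt x.2.2 hcurve), ← map_smul]
  simp

theorem linearIndependent_of_mul_sub_mul_ne_zero {u₁ u₂ m : ℝ} {w : ℝ × ℝ × ℝ} (hm : m ≠ 0)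
    (hdet : u₁ * w.2.1 - u₂ * w.1 ≠ 0) :
    LinearIndependent ℝ ![((u₁, u₂, 0) : ℝ × ℝ × ℝ), (u₁, u₂, m), w] := by
  rw [Fintype.linearIndependent_iff]
  intro c hc
  simp only [Fin.sum_univ_three, Matrix.cons_val, Prod.smul_mk, smul_eq_mul, Prod.mk_add_mk,
    Prod.fst_add, Prod.snd_add, Prod.smul_fst, Prod.smul_snd,
    Prod.ext_iff, Prod.fst_zero, Prod.snd_zero] at hc
  obtain ⟨h₁, h₂, h₃⟩ := hc
  have hc01 : c 0 + c 1 = 0 := by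
    refine (mul_eq_zero.1 ?_).resolve_right hdet
    linear_combination w.2.1 * h₁ - w.1 * h₂
  have hc2 : c 2 = 0 := by
    refine (mul_eq_zero.1 ?_).resolve_right hdet
    linear_combination u₁ * h₂ - u₂ * h₁
  have hc1 : c 1 = 0 := by
    refine (mul_eq_zero.1 ?_).resolve_right hm
    linear_combination h₃ - w.2.2 * hc2
  have hc0 : c 0 = 0 := by linarith
  intro i
  fin_cases i <;> assumption

theorem exists_mem_Icc_add_mul_ne_zero {b B α : ℝ} (hbB : b < B) (hα : α ≠ 0) (β : ℝ) :
    ∃ p ∈ Icc b B, α + β * p ≠ 0 := by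
  by_contra! h
  have hβ : β * (B - b) = 0 := by
    linear_combination h B ⟨hbB.le, le_rfl⟩ - h b ⟨le_rfl, hbB.le⟩
  have hβ0 : β = 0 := (mul_eq_zero.1 hβ).resolve_right (sub_ne_zero.2 hbB.ne')
  exact hα (by simpa [hβ0] using h b ⟨le_rfl, hbB.le⟩)

theorem mul_add_mul_pos_of_add_pos {x y s t : ℝ} (hx : 0 ≤ x) (hy : 0 ≤ y) (hxy : 0 < x + y)
    (hs : 0 < s) (ht : 0 < t) : 0 < x * s + y * t := by
  rcases hx.eq_or_lt with rfl | hx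
  · simp only [zero_add] at hxy; positivity
  · positivity

variable {a q₁ c₁ d c₁M dM q₂ q₃ c₂ c₃ c₂M c₃M : ℝ} {g : ℝ × ℝ × ℝ → ℝ → ℝ × ℝ × ℝ}

theorem lieBracket_fst_eq_and_snd_fst_eq
    (hg : ∀ (x : ℝ × ℝ × ℝ) (i : ℝ), g x i =
      (a * (1 - x.1) - (q₁ + q₂ * x.2.1 + q₃ * x.2.2) * x.1,
       c₁ / (1 + c₂ * x.2.1 + c₃ * x.2.2) * x.1 - d * x.2.1,
       c₁M / (1 + c₂M * x.2.1 + c₃M * x.2.2) * i - dM * x.2.2))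
    {x : ℝ × ℝ × ℝ} (hE : 1 + c₂ * x.2.1 + c₃ * x.2.2 ≠ 0)
    (hEM : 1 + c₂M * x.2.1 + c₃M * x.2.2 ≠ 0) :
    (lieBracket ℝ (g · 0) (g · 1) x).1 =
        c₁M / (1 + c₂M * x.2.1 + c₃M * x.2.2) * (q₃ * x.1) ∧
      (lieBracket ℝ (g · 0) (g · 1) x).2.1 =
        c₁M / (1 + c₂M * x.2.1 + c₃M * x.2.2) *
          (c₁ * c₃ * x.1 / (1 + c₂ * x.2.1 + c₃ * x.2.2) ^ 2) := by
  have hdiff : ∀ i, DifferentiableAt ℝ (g · i) x := by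
    intro i
    simp_rw [hg]
    fun_prop (disch := assumption)
  have hsub : g x 0 - g x 1 = (0, 0, -(c₁M / (1 + c₂M * x.2.1 + c₃M * x.2.2))) := by
    simp only [hg, mul_zero, zero_sub, mul_one, Prod.mk_sub_mk, sub_self, Prod.mk.injEq, true_and]
    ring
  constructor
  · refine (map_lieBracket_of_comp_eq (ContinuousLinearMap.fst ℝ ℝ (ℝ × ℝ))
      (ψ := fun y => a * (1 - y.1) - (q₁ + q₂ * y.2.1 + q₃ * y.2.2) * y.1)
      (funext fun y => by simp [hg]) (funext fun y => by simp [hg]) (hdiff 0) (hdiff 1)).trans ?_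
    have hpartial : HasDerivAt (fun t => a * (1 - x.1) - (q₁ + q₂ * x.2.1 + q₃ * t) * x.1)
        (-(q₃ * x.1)) x.2.2 := by
      refine ((((hasDerivAt_id' x.2.2).const_mul q₃).const_add (q₁ + q₂ * x.2.1)).mul_const x.1
        |>.const_sub (a * (1 - x.1))).congr_deriv ?_
      ring
    rw [hsub, fderiv_apply_zero_zero (by fun_prop) hpartial, smul_eq_mul]
    ring
  · refine (map_lieBracket_of_comp_eq
      ((ContinuousLinearMap.fst ℝ ℝ ℝ).comp (ContinuousLinearMap.snd ℝ ℝ (ℝ × ℝ)))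
      (ψ := fun y => c₁ / (1 + c₂ * y.2.1 + c₃ * y.2.2) * y.1 - d * y.2.1)
      (funext fun y => by simp [hg]) (funext fun y => by simp [hg]) (hdiff 0) (hdiff 1)).trans ?_
    have hpartial : HasDerivAt (fun t => c₁ / (1 + c₂ * x.2.1 + c₃ * t) * x.1 - d * x.2.1)
        (-(c₁ * c₃ * x.1 / (1 + c₂ * x.2.1 + c₃ * x.2.2) ^ 2)) x.2.2 := by
      refine (((hasDerivAt_const x.2.2 c₁).div (((hasDerivAt_id' x.2.2).const_mul c₃).const_add
        (1 + c₂ * x.2.1)) hE).mul_const x.1 |>.sub_const (d * x.2.1)).congr_deriv ?_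
      ring
    rw [hsub, fderiv_apply_zero_zero (by fun_prop (disch := assumption)) hpartial, smul_eq_mul]
    ring

theorem stmt_16_general
    (a q₁ c₁ d c₁M dM q₂ q₃ c₂ c₃ c₂M c₃M : ℝ)
    (ha : 0 < a) (hq₁ : 0 < q₁) (hc₁ : 0 < c₁) (hd : 0 < d)
    (hc₁M : 0 < c₁M) (hdM : 0 < dM)
    (hq₂ : 0 ≤ q₂) (hq₃ : 0 ≤ q₃) (hc₂ : 0 ≤ c₂) (hc₃ : 0 ≤ c₃)
    (hc₂M : 0 ≤ c₂M)
    (g : ℝ × ℝ × ℝ → ℝ → ℝ × ℝ × ℝ)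
    (hg : ∀ (x : ℝ × ℝ × ℝ) (i : ℝ), g x i =
      (a * (1 - x.1) - (q₁ + q₂ * x.2.1 + q₃ * x.2.2) * x.1,
       c₁ / (1 + c₂ * x.2.1 + c₃ * x.2.2) * x.1 - d * x.2.1,
       c₁M / (1 + c₂M * x.2.1 + c₃M * x.2.2) * i - dM * x.2.2))
    (b₁ B₁ b₂ : ℝ)
    (hb₁ : b₁ = a / (a + q₁ + q₂ * (c₁ / d) + q₃ * (c₁M / dM)))
    (hB₁ : B₁ = a / (a + q₁))
    (hb₂ : b₂ = c₁ * b₁ / (d * (1 + c₂ * (c₁ / d) + c₃ * (c₁M / dM))))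
    (hqq : 0 < q₂ + q₃) (hcq : 0 < c₃ + q₃) :
    ∃ x ∈ Icc b₁ B₁ ×ˢ Icc b₂ (c₁ / d) ×ˢ Icc 0 (c₁M / dM),
      LinearIndependent ℝ
        ![g x 0, g x 1,
          fderiv ℝ (fun y => g y 1) x (g x 0)
            - fderiv ℝ (fun y => g y 0) x (g x 1)] := by
  have hcd : 0 < c₁ / d := div_pos hc₁ hd
  have hcdM : 0 < c₁M / dM := div_pos hc₁M hdM
  have hb₁B₁ : b₁ < B₁ := by
    rw [hb₁, hB₁]
    exact div_lt_div_of_pos_left ha (by positivity)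
      (by linarith [mul_add_mul_pos_of_add_pos hq₂ hq₃ hqq hcd hcdM])
  have hB₁1 : B₁ < 1 := by rw [hB₁, div_lt_one (by positivity)]; linarith
  have hb₂le : b₂ ≤ c₁ / d := by
    rw [hb₂]
    exact div_le_div₀ hc₁.le (mul_le_of_le_one_right hc₁.le (by linarith)) hd
      (le_mul_of_one_le_right hd.le (by linarith [mul_nonneg hc₂ hcd.le, mul_nonneg hc₃ hcdM.le]))
  have hα : 0 < c₃ * (a * c₁ / (1 + c₂ * (c₁ / d)) ^ 2) + q₃ * c₁ :=
    mul_add_mul_pos_of_add_pos hc₃ hq₃ hcq (by positivity) hc₁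
  obtain ⟨p, hp, hkey⟩ := exists_mem_Icc_add_mul_ne_zero hb₁B₁ hα.ne'
    (-((a + q₁ + q₂ * (c₁ / d)) * c₁ * c₃ / (1 + c₂ * (c₁ / d)) ^ 2
      + c₁ * q₃ / (1 + c₂ * (c₁ / d))))
  refine ⟨(p, c₁ / d, 0), ⟨hp, ⟨hb₂le, le_rfl⟩, le_rfl, hcdM.le⟩, ?_⟩
  obtain ⟨hw₁, hw₂⟩ := lieBracket_fst_eq_and_snd_fst_eq hg (x := (p, c₁ / d, 0))
    (by simp only [mul_zero, add_zero]; positivity) (by simp only [mul_zero, add_zero]; positivity)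
  change LinearIndependent ℝ ![_, _, lieBracket ℝ (g · 0) (g · 1) _]
  rw [hg _ 0, hg _ 1]
  dsimp only at hw₁ hw₂ ⊢
  simp only [mul_zero, add_zero, sub_zero, mul_one] at hw₁ hw₂ ⊢
  refine linearIndependent_of_mul_sub_mul_ne_zero (by positivity) ?_
  rw [hw₁, hw₂]
  have hp : 0 < p := lt_of_lt_of_le (by rw [hb₁]; positivity) hp.1
  convert mul_ne_zero (mul_ne_zero (by positivity : c₁M / (1 + c₂M * (c₁ / d)) ≠ 0) hp.ne') hkey
    using 1
  field_simp
  ring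

/-- if `q₂ + q₃ > 0` and `c₃ + q₃ > 0`, there exists a point
`x ∈ B` at which `g(x,0)`, `g(x,1)` and the Lie bracket `[g(·,0),g(·,1)](x)`
are linearly independent (hence form a basis of `ℝ³`). -/
theorem stmt_16
    (a q₁ c₁ d c₁M dM q₂ q₃ c₂ c₃ c₂M c₃M : ℝ)
    (ha : 0 < a) (hq₁ : 0 < q₁) (hc₁ : 0 < c₁) (hd : 0 < d)
    (hc₁M : 0 < c₁M) (hdM : 0 < dM)
    (hq₂ : 0 ≤ q₂) (hq₃ : 0 ≤ q₃) (hc₂ : 0 ≤ c₂) (hc₃ : 0 ≤ c₃)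
    (hc₂M : 0 ≤ c₂M) (hc₃M : 0 ≤ c₃M)
    (g : ℝ × ℝ × ℝ → ℝ → ℝ × ℝ × ℝ)
    (hg : ∀ (x : ℝ × ℝ × ℝ) (i : ℝ), g x i =
      (a * (1 - x.1) - (q₁ + q₂ * x.2.1 + q₃ * x.2.2) * x.1,
       c₁ / (1 + c₂ * x.2.1 + c₃ * x.2.2) * x.1 - d * x.2.1,
       c₁M / (1 + c₂M * x.2.1 + c₃M * x.2.2) * i - dM * x.2.2))
    (b₁ B₁ b₂ : ℝ)
    (hb₁ : b₁ = a / (a + q₁ + q₂ * (c₁ / d) + q₃ * (c₁M / dM)))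
    (hB₁ : B₁ = a / (a + q₁))
    (hb₂ : b₂ = c₁ * b₁ / (d * (1 + c₂ * (c₁ / d) + c₃ * (c₁M / dM))))
    (hqq : 0 < q₂ + q₃) (hcq : 0 < c₃ + q₃) :
    ∃ x ∈ Icc b₁ B₁ ×ˢ Icc b₂ (c₁ / d) ×ˢ Icc 0 (c₁M / dM),
      LinearIndependent ℝ
        ![g x 0, g x 1,
          fderiv ℝ (fun y => g y 1) x (g x 0)
            - fderiv ℝ (fun y => g y 0) x (g x 1)] :=
  stmt_16_general a q₁ c₁ d c₁M dM q₂ q₃ c₂ c₃ c₂M c₃M ha hq₁ hc₁ hd hc₁M hdM hq₂ hq₃ hc₂ hc₃ hc₂M g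
    hg b₁ B₁ b₂ hb₁ hB₁ hb₂ hqq hcq
end
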